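/- arXiv:1804.05723 — 4 statements merged into one kernel-verified Lean document; each statement's English description precedes it below -/
import Mathlib

section
/- Let a > 0, d ≥ 0, let g : (0,a) → (0,∞) be a measurable function, and set D = {(x,y) ∈ ℝ² : 0 < x < a, 0 < y < g(x)}. Then for every continuously differentiable function u : ℝ² → ℝ satisfying u(x,0) = 0 for all x ∈ (0,a), one has ∫_D u(x,y)²/(d+y)² dx dy ≤ 4 ∫_D (∂_y u(x,y))² dx dy. -/
open MeasureTheory Set
open scoped ENNReal

lemma hardy1d (d b : ℝ) (hd : 0 ≤ d) (hb : 0 < b) (f f' : ℝ → ℝ)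
    (hderiv : ∀ y, HasDerivAt f (f' y) y) (hf'c : Continuous f') (hf0 : f 0 = 0) :
    ∫⁻ y in Ioo 0 b, ENNReal.ofReal (f y ^ 2 / (d + y) ^ 2)
      ≤ 4 * ∫⁻ y in Ioo 0 b, ENNReal.ofReal (f' y ^ 2) := by
  have hfc : Continuous f := continuous_iff_continuousAt.2 fun y => (hderiv y).continuousAt
  -- bound on f'
  obtain ⟨C, hC⟩ := isCompact_Icc.exists_bound_of_continuousOn (hf'c.continuousOn (s := Icc 0 b))
  set M : ℝ := max C 0 with hMdef
  have hM0 : 0 ≤ M := le_max_right _ _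
  have hM : ∀ y ∈ Icc 0 b, |f' y| ≤ M := fun y hy => (hC y hy).trans (le_max_left _ _)
  -- |f y| ≤ M * y
  have hfy : ∀ y ∈ Icc 0 b, |f y| ≤ M * y := by
    intro y hy
    have := Convex.norm_image_sub_le_of_norm_hasDerivWithin_le
      (fun z hz => (hderiv z).hasDerivWithinAt) (fun z hz => hM z hz) (convex_Icc 0 b)
      (Set.left_mem_Icc.2 (by linarith [hy.1, hy.2] : (0:ℝ) ≤ b)) hy
    simpa [hf0, abs_of_nonneg hy.1] using this
  set h : ℝ → ℝ := fun y => f y ^ 2 / (d + y) ^ 2 with hhdef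
  set k : ℝ → ℝ := fun y => f' y ^ 2 with hkdef
  have h_nonneg : ∀ y, 0 ≤ h y := fun y => div_nonneg (sq_nonneg _) (sq_nonneg _)
  have h_meas : Measurable h :=
    (hfc.measurable.pow_const 2).div ((measurable_const.add measurable_id).pow_const 2)
  have h_le : ∀ y ∈ Ioc 0 b, h y ≤ M ^ 2 := by
    intro y hy
    have h1 := hfy y ⟨hy.1.le, hy.2⟩
    have h2 : (0:ℝ) < (d + y) ^ 2 := by nlinarith [hy.1]
    rw [hhdef]
    simp only
    rw [div_le_iff₀ h2]
    have h3 := abs_le.1 h1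
    have hfy2 : f y ^ 2 ≤ (M * y) ^ 2 := sq_le_sq' (by linarith [h3.1]) h3.2
    have h4 : (M * y) ^ 2 ≤ M ^ 2 * (d + y) ^ 2 := by nlinarith [mul_nonneg (sq_nonneg M) (sq_nonneg d), mul_nonneg (mul_nonneg (sq_nonneg M) hd) hy.1.le]
    linarith
  have h_int : IntegrableOn h (Ioo 0 b) := by
    apply Integrable.mono' (g := fun _ => M ^ 2)
      (integrableOn_const measure_Ioo_lt_top.ne) h_meas.aestronglyMeasurable
    filter_upwards [ae_restrict_mem measurableSet_Ioo] with y hy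
    rw [Real.norm_eq_abs, abs_of_nonneg (h_nonneg y)]
    exact h_le y ⟨hy.1, hy.2.le⟩
  have k_cont : Continuous k := hf'c.pow 2
  have k_nonneg : ∀ y, 0 ≤ k y := fun y => sq_nonneg _
  have k_int : IntegrableOn k (Ioo 0 b) :=
    (k_cont.integrableOn_Icc).mono_set Ioo_subset_Icc_self
  rw [← MeasureTheory.ofReal_integral_eq_lintegral_ofReal h_int (ae_of_all _ h_nonneg),
    ← MeasureTheory.ofReal_integral_eq_lintegral_ofReal k_int (ae_of_all _ k_nonneg),
    ← ENNReal.ofReal_ofNat, ← ENNReal.ofReal_mul (by norm_num)]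
  apply ENNReal.ofReal_le_ofReal
  -- real inequality
  have key : ∀ ε : ℝ, 0 < ε → ε < b →
      ∫ y in Ioo 0 b, h y ≤ 4 * (∫ y in Ioo 0 b, k y) + 3 * M ^ 2 * ε := by
    intro ε hε hεb
    set φ : ℝ → ℝ := fun y => f y ^ 2 / (d + y) with hφdef
    set ψ : ℝ → ℝ := fun y => 2 * f y * f' y / (d + y) - h y with hψdef
    have hdy : ∀ y ∈ Icc ε b, 0 < d + y := fun y hy => by linarith [hy.1]
    have huIcc : uIcc ε b = Icc ε b := uIcc_of_le hεb.le
    have hφ' : ∀ y ∈ Icc ε b, HasDerivAt φ (ψ y) y := by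
      intro y hy
      have h1 : HasDerivAt (fun z => f z ^ 2) (2 * f y * f' y) y := by
        have := (hderiv y).fun_pow 2
        simpa [mul_comm, mul_assoc, mul_left_comm] using this
      have h2 : HasDerivAt (fun z : ℝ => d + z) 1 y := (hasDerivAt_id y).const_add d
      have h3 := h1.fun_div h2 (hdy y hy).ne'
      refine h3.congr_deriv ?_
      rw [hψdef, hhdef]
      have hne := (hdy y hy).ne'
      field_simp
    have hcont_h : ContinuousOn h (Icc ε b) := by
      apply ContinuousOn.div ((hfc.continuousOn).pow 2)
        (((continuous_const.add continuous_id).continuousOn).pow 2)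
      exact fun y hy => pow_ne_zero 2 (hdy y hy).ne'
    have hcont_ψ : ContinuousOn ψ (Icc ε b) := by
      apply ContinuousOn.sub _ hcont_h
      apply ContinuousOn.div (((continuous_const.mul hfc).mul hf'c).continuousOn)
        ((continuous_const.add continuous_id).continuousOn)
      exact fun y hy => (hdy y hy).ne'
    have hii_h : IntervalIntegrable h volume ε b :=
      (huIcc ▸ hcont_h).intervalIntegrable
    have hii_ψ : IntervalIntegrable ψ volume ε b :=
      (huIcc ▸ hcont_ψ).intervalIntegrable
    have hii_k : IntervalIntegrable k volume ε b := k_cont.intervalIntegrable ε b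
    have hFTC : ∫ y in ε..b, ψ y = φ b - φ ε :=
      intervalIntegral.integral_eq_sub_of_hasDerivAt (fun y hy => hφ' y (huIcc ▸ hy)) hii_ψ
    have hpt : ∀ y ∈ Icc ε b, h y ≤ 4 * k y - 2 * ψ y := by
      intro y hy
      have hne := (hdy y hy).ne'
      have hA : h y = (f y / (d + y)) ^ 2 := by rw [hhdef]; simp [div_pow]
      have hB : ψ y = 2 * (f y / (d + y)) * f' y - h y := by
        rw [hψdef]; simp only; ring
      have hk : k y = f' y ^ 2 := rfl
      rw [hB, hA, hk]
      nlinarith [sq_nonneg (2 * f' y - f y / (d + y))]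
    have hmono : ∫ y in ε..b, h y ≤ ∫ y in ε..b, (4 * k y - 2 * ψ y) :=
      intervalIntegral.integral_mono_on hεb.le hii_h
        ((hii_k.const_mul 4).sub (hii_ψ.const_mul 2)) hpt
    have hsub : ∫ y in ε..b, (4 * k y - 2 * ψ y)
        = 4 * (∫ y in ε..b, k y) - 2 * (φ b - φ ε) := by
      rw [intervalIntegral.integral_sub (hii_k.const_mul 4) (hii_ψ.const_mul 2),
        intervalIntegral.integral_const_mul, intervalIntegral.integral_const_mul, hFTC]
    have hφb : 0 ≤ φ b := div_nonneg (sq_nonneg _) (by linarith)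
    have hφε : φ ε ≤ M ^ 2 * ε := by
      have h1 := abs_le.1 (hfy ε ⟨hε.le, hεb.le⟩)
      have h2 : f ε ^ 2 ≤ (M * ε) ^ 2 := sq_le_sq' (by linarith [h1.1]) h1.2
      rw [hφdef]
      simp only
      rw [div_le_iff₀ (by linarith : (0:ℝ) < d + ε)]
      nlinarith [mul_nonneg (mul_nonneg hM0 hM0) (mul_nonneg hd hε.le)]
    have hsub1 : Ioc 0 ε ⊆ Ioo 0 b := fun y hy => ⟨hy.1, lt_of_le_of_lt hy.2 hεb⟩
    have hsub2 : Ioo ε b ⊆ Ioo 0 b := Ioo_subset_Ioo_left hε.le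
    have hdisj : Disjoint (Ioc 0 ε) (Ioo ε b) := by
      rw [Set.disjoint_left]
      rintro y ⟨_, h1⟩ ⟨h2, _⟩
      exact absurd h1 (not_le.2 h2)
    have hsplit : ∫ y in Ioo 0 b, h y = (∫ y in Ioc 0 ε, h y) + ∫ y in Ioo ε b, h y := by
      rw [← Ioc_union_Ioo_eq_Ioo hε.le hεb,
        setIntegral_union hdisj measurableSet_Ioo (h_int.mono_set hsub1) (h_int.mono_set hsub2)]
    have hA : ∫ y in Ioc 0 ε, h y ≤ M ^ 2 * ε := by
      calc ∫ y in Ioc 0 ε, h y ≤ ∫ _y in Ioc 0 ε, M ^ 2 :=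
            setIntegral_mono_on (h_int.mono_set hsub1) (integrableOn_const measure_Ioc_lt_top.ne)
              measurableSet_Ioc (fun y hy => h_le y ⟨hy.1, hy.2.trans hεb.le⟩)
        _ = M ^ 2 * ε := by
            rw [setIntegral_const, Real.volume_real_Ioc_of_le hε.le, smul_eq_mul]
            ring
    have hkmono : ∫ y in Ioo ε b, k y ≤ ∫ y in Ioo 0 b, k y :=
      setIntegral_mono_set k_int (ae_of_all _ k_nonneg) (HasSubset.Subset.eventuallyLE hsub2)
    have hIk : ∫ y in ε..b, k y = ∫ y in Ioo ε b, k y := by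
      rw [intervalIntegral.integral_of_le hεb.le, integral_Ioc_eq_integral_Ioo]
    have hIh : ∫ y in Ioo ε b, h y = ∫ y in ε..b, h y := by
      rw [intervalIntegral.integral_of_le hεb.le, integral_Ioc_eq_integral_Ioo]
    have hB : ∫ y in Ioo ε b, h y ≤ 4 * (∫ y in Ioo 0 b, k y) + 2 * M ^ 2 * ε := by
      rw [hIh]
      have h5 := hmono.trans_eq hsub
      rw [hIk] at h5
      have h6 : (4:ℝ) * ∫ y in Ioo ε b, k y ≤ 4 * ∫ y in Ioo 0 b, k y := by linarith [hkmono]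
      have h7 : -(2 * (φ b - φ ε)) ≤ 2 * (M ^ 2 * ε) := by linarith [hφb, hφε]
      have h8 : 2 * (M ^ 2 * ε) = 2 * M ^ 2 * ε := by ring
      linarith only [h5, h6, h7, h8]
    linarith [hA, hB, hsplit]
  apply le_of_forall_pos_le_add
  intro δ hδ
  set ε : ℝ := min (b / 2) (δ / (3 * (M ^ 2 + 1))) with hεdef
  have hεpos : 0 < ε := lt_min (by linarith) (by positivity)
  have hεb : ε < b := lt_of_le_of_lt (min_le_left _ _) (by linarith)
  have h1 : ε ≤ δ / (3 * (M ^ 2 + 1)) := min_le_right _ _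
  have h2 : 3 * M ^ 2 * ε ≤ δ := by
    have h3 : 3 * M ^ 2 * ε ≤ 3 * M ^ 2 * (δ / (3 * (M ^ 2 + 1))) :=
      mul_le_mul_of_nonneg_left h1 (by positivity)
    have h4 : 3 * M ^ 2 * (δ / (3 * (M ^ 2 + 1))) ≤ δ := by
      rw [mul_div_assoc', div_le_iff₀ (by positivity : (0:ℝ) < 3 * (M ^ 2 + 1))]
      nlinarith [sq_nonneg M]
    linarith
  have h9 : (4 * ∫ y in Ioo 0 b, k y) + 3 * M ^ 2 * ε ≤ (4 * ∫ y in Ioo 0 b, k y) + δ := by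
    linarith [h2]
  exact (key ε hεpos hεb).trans h9

/-- **Hardy-type inequality on the edge subdomain.**
Let `a > 0`, `d ≥ 0`, `g : (0,a) → (0,∞)` measurable, and
`D = {(x,y) : 0 < x < a, 0 < y < g x}`. For every `C¹` function `u : ℝ² → ℝ`
with `u (x, 0) = 0` for all `x ∈ (0,a)`, one has
`∫_D u² / (d+y)² ≤ 4 ∫_D (∂_y u)²`. -/
theorem edge_hardy_inequality (a d : ℝ) (ha : 0 < a) (hd : 0 ≤ d)
    (g : ℝ → ℝ) (hg : Measurable g) (hgpos : ∀ x ∈ Set.Ioo 0 a, 0 < g x)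
    (u : ℝ × ℝ → ℝ) (hu : ContDiff ℝ 1 u)
    (hu0 : ∀ x ∈ Set.Ioo 0 a, u (x, 0) = 0) :
    ∫⁻ p in {p : ℝ × ℝ | p.1 ∈ Set.Ioo 0 a ∧ p.2 ∈ Set.Ioo 0 (g p.1)},
        ENNReal.ofReal ((u p) ^ 2 / (d + p.2) ^ 2)
      ≤ 4 * ∫⁻ p in {p : ℝ × ℝ | p.1 ∈ Set.Ioo 0 a ∧ p.2 ∈ Set.Ioo 0 (g p.1)},
        ENNReal.ofReal ((fderiv ℝ u p (0, 1)) ^ 2) := by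
  set S : Set (ℝ × ℝ) := {p : ℝ × ℝ | p.1 ∈ Set.Ioo 0 a ∧ p.2 ∈ Set.Ioo 0 (g p.1)} with hSdef
  have hS : MeasurableSet S := by
    have h1 : MeasurableSet {p : ℝ × ℝ | p.1 ∈ Set.Ioo 0 a} :=
      measurableSet_Ioo.preimage measurable_fst
    have h2 : MeasurableSet {p : ℝ × ℝ | 0 < p.2} :=
      measurableSet_lt measurable_const measurable_snd
    have h3 : MeasurableSet {p : ℝ × ℝ | p.2 < g p.1} :=
      measurableSet_lt measurable_snd (hg.comp measurable_fst)
    exact (h1.inter (h2.inter h3) : _)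
  have hucont : Continuous u := hu.continuous
  have hfd : Continuous fun p : ℝ × ℝ => fderiv ℝ u p (0, 1) :=
    (hu.continuous_fderiv one_ne_zero).clm_apply continuous_const
  set F₁ : ℝ × ℝ → ℝ≥0∞ := fun p => ENNReal.ofReal (u p ^ 2 / (d + p.2) ^ 2) with hF₁def
  set F₂ : ℝ × ℝ → ℝ≥0∞ := fun p => ENNReal.ofReal ((fderiv ℝ u p (0, 1)) ^ 2) with hF₂def
  have hF₁ : Measurable F₁ :=
    (((hucont.measurable).pow_const 2).div
      (((measurable_const.add measurable_snd)).pow_const 2)).ennreal_ofReal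
  have hF₂ : Measurable F₂ := ((hfd.measurable).pow_const 2).ennreal_ofReal
  have key : ∀ F : ℝ × ℝ → ℝ≥0∞, Measurable F →
      ∫⁻ p in S, F p = ∫⁻ x, ∫⁻ y, S.indicator F (x, y) := by
    intro F hF
    rw [← lintegral_indicator hS, Measure.volume_eq_prod, lintegral_prod]
    exact (hF.indicator hS).aemeasurable
  rw [key F₁ hF₁, key F₂ hF₂]
  have hpt : ∀ x : ℝ, (∫⁻ y, S.indicator F₁ (x, y)) ≤ 4 * ∫⁻ y, S.indicator F₂ (x, y) := by
    intro x
    by_cases hx : x ∈ Set.Ioo 0 a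
    · have hind : ∀ (F : ℝ × ℝ → ℝ≥0∞) (y : ℝ),
          S.indicator F (x, y) = (Set.Ioo 0 (g x)).indicator (fun y => F (x, y)) y := by
        intro F y
        by_cases hy : y ∈ Set.Ioo 0 (g x)
        · have hmem : (x, y) ∈ S := ⟨hx, hy⟩
          rw [Set.indicator_of_mem hmem, Set.indicator_of_mem hy]
        · have hmem : (x, y) ∉ S := fun hmem => hy hmem.2
          rw [Set.indicator_of_notMem hmem, Set.indicator_of_notMem hy]
      simp only [hind]
      rw [lintegral_indicator measurableSet_Ioo, lintegral_indicator measurableSet_Ioo]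
      have hderiv : ∀ y : ℝ, HasDerivAt (fun y => u (x, y)) (fderiv ℝ u (x, y) (0, 1)) y := by
        intro y
        have h1 : HasFDerivAt u (fderiv ℝ u (x, y)) (x, y) :=
          (hu.differentiable one_ne_zero (x, y)).hasFDerivAt
        have h2 : HasDerivAt (fun t : ℝ => ((x : ℝ), t)) ((0 : ℝ), (1 : ℝ)) y :=
          (hasDerivAt_const y x).prodMk (hasDerivAt_id y)
        exact h1.comp_hasDerivAt y h2
      have hf'c : Continuous fun y : ℝ => fderiv ℝ u (x, y) (0, 1) :=
        hfd.comp (continuous_const.prodMk continuous_id)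
      exact hardy1d d (g x) hd (hgpos x hx) (fun y => u (x, y))
        (fun y => fderiv ℝ u (x, y) (0, 1)) hderiv hf'c (hu0 x hx)
    · have hz : ∀ y : ℝ, S.indicator F₁ (x, y) = 0 := by
        intro y
        apply Set.indicator_of_notMem
        intro hmem
        exact hx hmem.1
      simp [hz]
  calc ∫⁻ x, ∫⁻ y, S.indicator F₁ (x, y)
      ≤ ∫⁻ x, 4 * ∫⁻ y, S.indicator F₂ (x, y) := lintegral_mono hpt
    _ = 4 * ∫⁻ x, ∫⁻ y, S.indicator F₂ (x, y) :=
        lintegral_const_mul' 4 _ (by norm_num)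
end

section
/- Let b > 0. There exists a constant c > 0 depending only on b such that for every d ∈ (0, e^{-1}) and every continuously differentiable function v : [0,b] → ℝ with v(0) = 0, one has ∫₀ᵇ v(y)²/(d+y) dy ≤ c ( v(b)² + (ln d)² ∫₀ᵇ (d+y) v'(y)² dy ). -/
open MeasureTheory Set

open Filter Topology in
lemma cs_integral (μ : Measure ℝ) (f h : ℝ → ℝ)
    (hf2 : Integrable (fun t => f t ^ 2) μ) (hh2 : Integrable (fun t => h t ^ 2) μ)
    (hfh : Integrable (fun t => f t * h t) μ) :
    (∫ t, f t * h t ∂μ) ^ 2 ≤ (∫ t, f t ^ 2 ∂μ) * (∫ t, h t ^ 2 ∂μ) := by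
  set A := ∫ t, f t ^ 2 ∂μ with hA
  set B := ∫ t, h t ^ 2 ∂μ with hB
  have hA0 : 0 ≤ A := integral_nonneg fun t => sq_nonneg _
  have hB0 : 0 ≤ B := integral_nonneg fun t => sq_nonneg _
  have key : ∀ l : ℝ, 0 < l → |∫ t, f t * h t ∂μ| ≤ (l * A + B / l) / 2 := by
    intro l hl
    have h1 : |∫ t, f t * h t ∂μ| ≤ ∫ t, |f t| * |h t| ∂μ := by
      simpa [Real.norm_eq_abs] using norm_integral_le_integral_norm (fun t => f t * h t) (μ := μ)
    have h2 : ∫ t, |f t| * |h t| ∂μ ≤ ∫ t, (l * f t ^ 2 + h t ^ 2 / l) / 2 ∂μ := by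
      apply integral_mono ?_ (((hf2.const_mul l).add (hh2.div_const l)).div_const 2)
      · intro t
        show |f t| * |h t| ≤ (l * f t ^ 2 + h t ^ 2 / l) / 2
        have e : (l * f t ^ 2 + h t ^ 2 / l) / 2 = (l ^ 2 * f t ^ 2 + h t ^ 2) / (l * 2) := by
          field_simp
        rw [e, le_div_iff₀ (by positivity)]
        nlinarith [sq_nonneg (l * |f t| - |h t|), sq_abs (f t), sq_abs (h t),
          abs_nonneg (f t), abs_nonneg (h t)]
      · have := hfh.abs
        simpa [abs_mul] using this
    have h3 : ∫ t, (l * f t ^ 2 + h t ^ 2 / l) / 2 ∂μ = (l * A + B / l) / 2 := by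
      rw [integral_div, integral_add (hf2.const_mul l) (hh2.div_const l), integral_const_mul,
        integral_div]
    linarith [h1, h2, h3.le, h3.ge]
  have ht : Tendsto (fun ε : ℝ => (A + ε) * (B + ε)) (𝓝[>] (0:ℝ)) (𝓝 (A * B)) := by
    have hc : Continuous (fun ε : ℝ => (A + ε) * (B + ε)) := by continuity
    have := hc.tendsto (0:ℝ)
    simpa using this.mono_left nhdsWithin_le_nhds
  refine ge_of_tendsto ht ?_
  filter_upwards [self_mem_nhdsWithin] with ε (hε : ε ∈ Ioi (0:ℝ))
  have hε0 : (0:ℝ) < ε := hε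
  set sa := Real.sqrt (A + ε) with hsa
  set sb := Real.sqrt (B + ε) with hsb
  have hsa0 : 0 < sa := Real.sqrt_pos.mpr (by linarith)
  have hsb0 : 0 < sb := Real.sqrt_pos.mpr (by linarith)
  have hsa2 : sa ^ 2 = A + ε := Real.sq_sqrt (by linarith)
  have hsb2 : sb ^ 2 = B + ε := Real.sq_sqrt (by linarith)
  have hl : 0 < sb / sa := div_pos hsb0 hsa0
  have h4 := key _ hl
  have h5 : (sb / sa * A + B / (sb / sa)) / 2 ≤ sa * sb := by
    rw [div_div_eq_mul_div]
    have e1 : sb / sa * A ≤ sb / sa * (A + ε) := by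
      apply mul_le_mul_of_nonneg_left (by linarith) hl.le
    have e2 : B * sa / sb ≤ (B + ε) * sa / sb := by
      gcongr
      linarith
    have e3 : sb / sa * (A + ε) = sa * sb := by
      rw [← hsa2]; field_simp
    have e4 : (B + ε) * sa / sb = sa * sb := by
      rw [← hsb2]; field_simp
    nlinarith
  have h6 : |∫ t, f t * h t ∂μ| ≤ sa * sb := le_trans h4 h5
  calc (∫ t, f t * h t ∂μ) ^ 2 = |∫ t, f t * h t ∂μ| ^ 2 := (sq_abs _).symm
    _ ≤ (sa * sb) ^ 2 := pow_le_pow_left₀ (abs_nonneg _) h6 2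
    _ = (A + ε) * (B + ε) := by rw [mul_pow, hsa2, hsb2]

/-- **The 1-D logarithmically weighted inequality (2.14).**
Let `b > 0`. There is `c > 0` (depending only on `b`) such that for every
`d ∈ (0, e⁻¹)` and every `C¹` function `v : [0,b] → ℝ` with `v 0 = 0`:
`∫₀ᵇ v(y)²/(d+y) dy ≤ c (v(b)² + (ln d)² ∫₀ᵇ (d+y) v'(y)² dy)`. -/
theorem one_dim_log_weighted_inequality (b : ℝ) (hb : 0 < b) :
    ∃ c > (0 : ℝ), ∀ d ∈ Set.Ioo (0 : ℝ) (Real.exp (-1)),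
      ∀ v : ℝ → ℝ, ContDiffOn ℝ 1 v (Set.Icc 0 b) → v 0 = 0 →
        ∫ y in Set.Ioo (0 : ℝ) b, (v y) ^ 2 / (d + y)
          ≤ c * ((v b) ^ 2
            + (Real.log d) ^ 2 * ∫ y in Set.Ioo (0 : ℝ) b, (d + y) * (deriv v y) ^ 2) := by
  set K : ℝ := max 0 (Real.log (Real.exp (-1) + b)) + 1 with hKdef
  have hK1 : 1 ≤ K := le_add_of_nonneg_left (le_max_left _ _)
  refine ⟨K ^ 2 / 2, by positivity, ?_⟩
  rintro d ⟨hd0, hd1⟩ v hv hv0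
  have hlogd : Real.log d < -1 := by
    have := Real.log_lt_log hd0 hd1
    rwa [Real.log_exp] at this
  set w : ℝ → ℝ := derivWithin v (Icc 0 b) with hwdef
  have hwc : ContinuousOn w (Icc 0 b) :=
    hv.continuousOn_derivWithin (uniqueDiffOn_Icc hb) le_rfl
  have hvc : ContinuousOn v (Icc 0 b) := hv.continuousOn
  have hdw : ∀ y ∈ Ioo (0:ℝ) b, HasDerivAt v (w y) y := by
    intro y hy
    have h1 : DifferentiableWithinAt ℝ v (Icc 0 b) y :=
      hv.differentiableOn one_ne_zero y ⟨hy.1.le, hy.2.le⟩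
    exact h1.hasDerivWithinAt.hasDerivAt (Icc_mem_nhds hy.1 hy.2)
  have hder_eq : ∀ y ∈ Ioo (0:ℝ) b, deriv v y = w y := fun y hy => (hdw y hy).deriv
  -- positivity of d + t on Icc
  have hdpos : ∀ t ∈ Icc (0:ℝ) b, 0 < d + t := fun t ht => by linarith [ht.1]
  -- FTC
  have hFTC : ∀ y ∈ Icc (0:ℝ) b, v y = ∫ t in Ioc (0:ℝ) y, w t := by
    intro y hy
    have hsub : Icc (0:ℝ) y ⊆ Icc 0 b := Icc_subset_Icc le_rfl hy.2
    have h1 : ∫ t in (0:ℝ)..y, w t = v y - v 0 := by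
      apply intervalIntegral.integral_eq_sub_of_hasDeriv_right_of_le hy.1 (hvc.mono hsub)
      · intro x hx
        exact (hdw x ⟨hx.1, hx.2.trans_le hy.2⟩).hasDerivWithinAt
      · apply ContinuousOn.intervalIntegrable
        rw [uIcc_of_le hy.1]
        exact hwc.mono hsub
    rw [intervalIntegral.integral_of_le hy.1] at h1
    rw [hv0, sub_zero] at h1
    exact h1.symm
  -- integrability of the weighted derivative
  have hwint : IntegrableOn (fun t => (d + t) * w t ^ 2) (Icc 0 b) := by
    apply ContinuousOn.integrableOn_Icc
    exact ((continuous_const.add continuous_id).continuousOn).mul (hwc.pow 2)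
  set J : ℝ := ∫ y in Ioo (0:ℝ) b, (d + y) * w y ^ 2 with hJdef
  have hJ0 : 0 ≤ J := setIntegral_nonneg measurableSet_Ioo fun y hy => by
    have := hdpos y ⟨hy.1.le, hy.2.le⟩; positivity
  -- the log integral
  have hlog_int : ∀ y ∈ Icc (0:ℝ) b, ∫ t in Ioc (0:ℝ) y, 1 / (d + t)
      = Real.log (d + y) - Real.log d := by
    intro y hy
    have h1 : ∫ t in (0:ℝ)..y, 1 / (d + t)
        = Real.log (d + y) - Real.log (d + 0) := by
      apply intervalIntegral.integral_eq_sub_of_hasDerivAt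
      · intro t ht
        rw [uIcc_of_le hy.1] at ht
        have htpos : 0 < d + t := hdpos t ⟨ht.1, ht.2.trans hy.2⟩
        exact ((hasDerivAt_id t).const_add d).log htpos.ne'
      · apply ContinuousOn.intervalIntegrable
        rw [uIcc_of_le hy.1]
        intro t ht
        have htpos : 0 < d + t := hdpos t ⟨ht.1, ht.2.trans hy.2⟩
        exact (continuousOn_const.div ((continuous_const.add continuous_id).continuousOn)
          (fun s hs => (hdpos s (Icc_subset_Icc le_rfl hy.2 hs)).ne')) t ht
    rw [intervalIntegral.integral_of_le hy.1] at h1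
    rw [h1, add_zero]
  -- the Cauchy-Schwarz pointwise bound
  have hpt : ∀ y ∈ Ioo (0:ℝ) b, v y ^ 2 ≤ J * (Real.log (d + y) - Real.log d) := by
    intro y hy
    have hyIcc : y ∈ Icc (0:ℝ) b := ⟨hy.1.le, hy.2.le⟩
    have hsub : Ioc (0:ℝ) y ⊆ Icc 0 b := fun t ht => ⟨ht.1.le, ht.2.trans hy.2.le⟩
    have hposOn : ∀ t ∈ Ioc (0:ℝ) y, 0 < d + t := fun t ht => hdpos t (hsub ht)
    -- integrability facts on Ioc 0 y
    have hint1 : IntegrableOn (fun t => (d + t) * w t ^ 2) (Ioc 0 y) := hwint.mono_set hsub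
    have hint2 : IntegrableOn (fun t => 1 / (d + t)) (Ioc 0 y) := by
      apply (ContinuousOn.integrableOn_Icc ?_).mono_set Ioc_subset_Icc_self
      exact continuousOn_const.div ((continuous_const.add continuous_id).continuousOn)
        (fun s hs => (hdpos s (Icc_subset_Icc le_rfl hy.2.le hs)).ne')
    have hintw : IntegrableOn w (Ioc 0 y) :=
      ((hwc.mono (Icc_subset_Icc le_rfl hy.2.le)).integrableOn_Icc).mono_set Ioc_subset_Icc_self
    set f : ℝ → ℝ := fun t => Real.sqrt (d + t) * w t with hfdef
    set g : ℝ → ℝ := fun t => 1 / Real.sqrt (d + t) with hgdef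
    have hEqOn_fg : EqOn (fun t => f t * g t) w (Ioc 0 y) := fun t ht => by
      have h2 := hposOn t ht
      have hs : Real.sqrt (d + t) ≠ 0 := (Real.sqrt_pos.mpr h2).ne'
      simp only [f, g]
      field_simp
    have hEqOn_f2 : EqOn (fun t => f t ^ 2) (fun t => (d + t) * w t ^ 2) (Ioc 0 y) :=
      fun t ht => by simp only [f, mul_pow, Real.sq_sqrt (hposOn t ht).le]
    have hEqOn_g2 : EqOn (fun t => g t ^ 2) (fun t => 1 / (d + t)) (Ioc 0 y) :=
      fun t ht => by simp only [g, div_pow, one_pow, Real.sq_sqrt (hposOn t ht).le]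
    have hif2 : IntegrableOn (fun t => f t ^ 2) (Ioc 0 y) :=
      hint1.congr_fun hEqOn_f2.symm measurableSet_Ioc
    have hig2 : IntegrableOn (fun t => g t ^ 2) (Ioc 0 y) :=
      hint2.congr_fun hEqOn_g2.symm measurableSet_Ioc
    have hifg : IntegrableOn (fun t => f t * g t) (Ioc 0 y) :=
      hintw.congr_fun hEqOn_fg.symm measurableSet_Ioc
    have hcs := cs_integral (volume.restrict (Ioc 0 y)) f g hif2 hig2 hifg
    rw [show (∫ t, f t * g t ∂(volume.restrict (Ioc 0 y))) = ∫ t in Ioc (0:ℝ) y, w t from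
        setIntegral_congr_fun measurableSet_Ioc hEqOn_fg,
      show (∫ t, f t ^ 2 ∂(volume.restrict (Ioc 0 y))) = ∫ t in Ioc (0:ℝ) y, (d + t) * w t ^ 2 from
        setIntegral_congr_fun measurableSet_Ioc hEqOn_f2,
      show (∫ t, g t ^ 2 ∂(volume.restrict (Ioc 0 y))) = ∫ t in Ioc (0:ℝ) y, 1 / (d + t) from
        setIntegral_congr_fun measurableSet_Ioc hEqOn_g2,
      hlog_int y hyIcc] at hcs
    have hv_eq : v y = ∫ t in Ioc (0:ℝ) y, w t := hFTC y hyIcc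
    have hfirst : ∫ t in Ioc (0:ℝ) y, (d + t) * w t ^ 2 ≤ J := by
      rw [integral_Ioc_eq_integral_Ioo]
      apply setIntegral_mono_set (hwint.mono_set Ioo_subset_Icc_self)
      · refine (ae_restrict_iff' measurableSet_Ioo).mpr (ae_of_all _ fun t ht => ?_)
        have := hdpos t ⟨ht.1.le, ht.2.le⟩
        positivity
      · exact HasSubset.Subset.eventuallyLE (Ioo_subset_Ioo le_rfl hy.2.le)
    have hLnn : 0 ≤ Real.log (d + y) - Real.log d := by
      have h3 : Real.log d ≤ Real.log (d + y) := by
        apply Real.log_le_log hd0; linarith [hy.1]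
      linarith
    calc v y ^ 2 = (∫ t in Ioc (0:ℝ) y, w t) ^ 2 := by rw [← hv_eq]
      _ ≤ (∫ t in Ioc (0:ℝ) y, (d + t) * w t ^ 2) * (Real.log (d + y) - Real.log d) := hcs
      _ ≤ J * (Real.log (d + y) - Real.log d) := mul_le_mul_of_nonneg_right hfirst hLnn
  -- integrate the pointwise bound
  have hLb0 : 0 ≤ Real.log (d + b) - Real.log d := by
    have h3 : Real.log d ≤ Real.log (d + b) := by
      apply Real.log_le_log hd0; linarith
    linarith
  have hIlog : ∫ y in Ioo (0:ℝ) b, (Real.log (d + y) - Real.log d) * (1 / (d + y))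
      = (Real.log (d + b) - Real.log d) ^ 2 / 2 := by
    rw [← integral_Ioc_eq_integral_Ioo, ← intervalIntegral.integral_of_le hb.le]
    have h1 : ∫ y in (0:ℝ)..b, (Real.log (d + y) - Real.log d) * (1 / (d + y))
        = (fun s => (Real.log (d + s) - Real.log d) ^ 2 / 2) b
          - (fun s => (Real.log (d + s) - Real.log d) ^ 2 / 2) 0 := by
      apply intervalIntegral.integral_eq_sub_of_hasDerivAt
      · intro t ht
        rw [uIcc_of_le hb.le] at ht
        have htpos : 0 < d + t := hdpos t ht
        have h2 : HasDerivAt (fun s => Real.log (d + s) - Real.log d) (1 / (d + t)) t :=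
          (((hasDerivAt_id t).const_add d).log htpos.ne').sub_const _
        have h3 := (h2.fun_pow 2).div_const 2
        exact h3.congr_deriv (by rw [show (2:ℕ) - 1 = 1 from rfl, pow_one]; ring)
      · apply ContinuousOn.intervalIntegrable
        rw [uIcc_of_le hb.le]
        apply ContinuousOn.mul
        · exact (ContinuousOn.log ((continuous_const.add continuous_id).continuousOn)
            (fun t ht => (hdpos t ht).ne')).sub continuousOn_const
        · exact continuousOn_const.div ((continuous_const.add continuous_id).continuousOn)
            (fun t ht => (hdpos t ht).ne')
    rw [h1]
    norm_num
  have hLint : IntegrableOn (fun y => v y ^ 2 / (d + y)) (Ioo 0 b) :=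
    (((hvc.pow 2).div ((continuous_const.add continuous_id).continuousOn)
      (fun t ht => (hdpos t ht).ne')).integrableOn_Icc).mono_set Ioo_subset_Icc_self
  have hRint : IntegrableOn
      (fun y => J * ((Real.log (d + y) - Real.log d) * (1 / (d + y)))) (Ioo 0 b) := by
    have hc : ContinuousOn
        (fun y => J * ((Real.log (d + y) - Real.log d) * (1 / (d + y)))) (Icc 0 b) := by
      apply continuousOn_const.mul
      apply ContinuousOn.mul
      · exact (ContinuousOn.log ((continuous_const.add continuous_id).continuousOn)
          (fun t ht => (hdpos t ht).ne')).sub continuousOn_const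
      · exact continuousOn_const.div ((continuous_const.add continuous_id).continuousOn)
          (fun t ht => (hdpos t ht).ne')
    exact hc.integrableOn_Icc.mono_set Ioo_subset_Icc_self
  have hmono : ∫ y in Ioo (0:ℝ) b, v y ^ 2 / (d + y)
      ≤ ∫ y in Ioo (0:ℝ) b, J * ((Real.log (d + y) - Real.log d) * (1 / (d + y))) := by
    apply setIntegral_mono_on hLint hRint measurableSet_Ioo
    intro y hy
    have h2 : 0 < d + y := hdpos y ⟨hy.1.le, hy.2.le⟩
    have h1 := hpt y hy
    calc v y ^ 2 / (d + y) = v y ^ 2 * (1 / (d + y)) := by ring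
      _ ≤ J * (Real.log (d + y) - Real.log d) * (1 / (d + y)) :=
          mul_le_mul_of_nonneg_right h1 (by positivity)
      _ = J * ((Real.log (d + y) - Real.log d) * (1 / (d + y))) := by ring
  have hfin : ∫ y in Ioo (0:ℝ) b, J * ((Real.log (d + y) - Real.log d) * (1 / (d + y)))
      = J * ((Real.log (d + b) - Real.log d) ^ 2 / 2) := by
    rw [integral_const_mul, hIlog]
  have hJeq : ∫ y in Ioo (0:ℝ) b, (d + y) * (deriv v y) ^ 2 = J :=
    setIntegral_congr_fun measurableSet_Ioo fun y hy => by rw [hder_eq y hy]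
  have hneg1 : (1:ℝ) ≤ -Real.log d := by linarith
  have h0max : (0:ℝ) ≤ max 0 (Real.log (Real.exp (-1) + b)) := le_max_left _ _
  have hLK : Real.log (d + b) - Real.log d ≤ K * (-Real.log d) := by
    have ha : Real.log (d + b) ≤ Real.log (Real.exp (-1) + b) := by
      apply Real.log_le_log (by linarith); linarith
    have hmax : Real.log (Real.exp (-1) + b) ≤ max 0 (Real.log (Real.exp (-1) + b)) :=
      le_max_right _ _
    have hmm : max 0 (Real.log (Real.exp (-1) + b)) * 1
        ≤ max 0 (Real.log (Real.exp (-1) + b)) * (-Real.log d) :=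
      mul_le_mul_of_nonneg_left hneg1 h0max
    rw [hKdef]
    nlinarith
  have hL2 : (Real.log (d + b) - Real.log d) ^ 2 ≤ K ^ 2 * (Real.log d) ^ 2 := by
    calc (Real.log (d + b) - Real.log d) ^ 2 ≤ (K * (-Real.log d)) ^ 2 :=
        pow_le_pow_left₀ hLb0 hLK 2
      _ = K ^ 2 * (Real.log d) ^ 2 := by ring
  rw [hJeq]
  clear_value w J K
  have hstep : J * ((Real.log (d + b) - Real.log d) ^ 2 / 2)
      ≤ K ^ 2 / 2 * ((v b) ^ 2 + (Real.log d) ^ 2 * J) := by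
    have h4 : J * (Real.log (d + b) - Real.log d) ^ 2 ≤ J * (K ^ 2 * (Real.log d) ^ 2) :=
      mul_le_mul_of_nonneg_left hL2 hJ0
    have h5 : 0 ≤ K ^ 2 * (v b) ^ 2 := by positivity
    have h6 : J * ((Real.log (d + b) - Real.log d) ^ 2 / 2)
        ≤ J * (K ^ 2 * Real.log d ^ 2) / 2 := by linarith
    have h7 : K ^ 2 / 2 * ((v b) ^ 2 + Real.log d ^ 2 * J)
        = K ^ 2 * (v b) ^ 2 / 2 + J * (K ^ 2 * Real.log d ^ 2) / 2 := by ring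
    linarith
  exact le_trans hmono (le_trans hfin.le hstep)
end

section
/- Let Ω ⊂ ℝ² be a convex polygonal domain, let c₀ be a vertex of Ω, and let R > 0 be such that the closed ball of radius R around c₀ meets ∂Ω only in the two boundary edges containing c₀. Let c_I > 1. Then there exists a constant c > 0 such that for all h ∈ (0,1/2), with σ_h(x) = c_I h² + dist(x, ∂Ω), one has ∫_{Ω ∩ B(c₀,R)} σ_h(x)^{-1} |x − c₀|^{-1} dx ≤ c |ln h|². -/
open MeasureTheory Set

/-- A convex polygonal domain: a bounded, convex, open subset of `ℝ²` whose boundary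
is a finite union of closed line segments. -/
def IsConvexPolygonalDomain (Ω : Set (EuclideanSpace ℝ (Fin 2))) : Prop :=
  IsOpen Ω ∧ Convex ℝ Ω ∧ Bornology.IsBounded Ω ∧
    ∃ (n : ℕ) (A B : Fin n → EuclideanSpace ℝ (Fin 2)),
      frontier Ω = ⋃ i, segment ℝ (A i) (B i)


local notation "E2" => EuclideanSpace ℝ (Fin 2)

section AuxCWIE
open intervalIntegral


-- unit normal to any vector in 2D
lemma exists_unit_normal (d : E2) : ∃ n : E2, ‖n‖ = 1 ∧ inner ℝ d n = (0:ℝ) := by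
  by_cases hd : d = 0
  · refine ⟨EuclideanSpace.single 0 1, ?_, ?_⟩
    · simp [EuclideanSpace.norm_single]
    · simp [hd]
  · set m : E2 := (WithLp.equiv 2 _).symm ![-(d 1), d 0] with hm
    have hm0 : m 0 = -(d 1) := rfl
    have hm1 : m 1 = d 0 := rfl
    have hinner : inner ℝ d m = (0:ℝ) := by
      rw [PiLp.inner_apply]
      simp [Fin.sum_univ_two, hm0, hm1]
      ring
    have hmne : m ≠ 0 := by
      intro h
      apply hd
      have h0 : d 0 = 0 := by
        have := congrFun (congrArg (WithLp.equiv 2 _) h) 1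
        simpa [hm1] using congrFun (congrArg (fun x : E2 => (x : Fin 2 → ℝ)) h) 1
      have h1 : d 1 = 0 := by
        have := congrFun (congrArg (fun x : E2 => (x : Fin 2 → ℝ)) h) 0
        simpa [hm0] using this
      ext i
      fin_cases i <;> simp [h0, h1]
    refine ⟨‖m‖⁻¹ • m, ?_, ?_⟩
    · rw [norm_smul]
      simp [norm_ne_zero_iff.mpr hmne]
    · rw [inner_smul_right, hinner]; ring


lemma exists_adapted_basis (n : E2) (hn : ‖n‖ = 1) :
    ∃ b : OrthonormalBasis (Fin 2) ℝ E2, b 0 = n := by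
  have hcard : Module.finrank ℝ E2 = Fintype.card (Fin 2) := by simp
  have horth : Orthonormal ℝ (({0} : Set (Fin 2)).restrict (fun _ => n)) := by
    rw [orthonormal_iff_ite]
    rintro ⟨i, hi⟩ ⟨j, hj⟩
    simp only [Set.mem_singleton_iff] at hi hj
    subst hi; subst hj
    simp only [Set.restrict_apply, if_pos rfl]
    rw [real_inner_self_eq_norm_sq, show ({0} : Set (Fin 2)).restrict (fun _ => n) ⟨0, hi⟩ = n from rfl, hn]
    norm_num
  obtain ⟨b, hb⟩ := horth.exists_orthonormalBasis_extension_of_card_eq hcard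
  exact ⟨b, hb 0 rfl⟩

lemma exists_coords (n : E2) (hn : ‖n‖ = 1) (c₀ : E2) :
    ∃ φ : ℝ × ℝ → E2, MeasurePreserving φ volume volume ∧ MeasurableEmbedding φ ∧
      (∀ p : ℝ × ℝ, ‖φ p - c₀‖ = Real.sqrt (p.1^2 + p.2^2)) ∧
      (∀ p : ℝ × ℝ, inner ℝ (φ p - c₀) n = p.1) := by
  obtain ⟨b, hb⟩ := exists_adapted_basis n hn
  let e1 : ℝ × ℝ ≃ᵐ (Fin 2 → ℝ) := (MeasurableEquiv.finTwoArrow).symm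
  let e2 : (Fin 2 → ℝ) ≃ᵐ E2 := (MeasurableEquiv.toLp 2 (Fin 2 → ℝ))
  let e3 : E2 ≃ᵐ E2 := b.repr.symm.toHomeomorph.toMeasurableEquiv
  let e4 : E2 ≃ᵐ E2 := (Homeomorph.addLeft c₀).toMeasurableEquiv
  have h1 : MeasurePreserving e1 volume volume := (volume_preserving_finTwoArrow ℝ).symm
  have h2 : MeasurePreserving e2 volume volume :=
    (EuclideanSpace.volume_preserving_symm_measurableEquiv_toLp (Fin 2)).symm
  have h3 : MeasurePreserving e3 volume volume := b.measurePreserving_repr_symm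
  have h4 : MeasurePreserving e4 volume volume := measurePreserving_add_left volume c₀
  have key : ∀ p : ℝ × ℝ, e4 (e3 (e2 (e1 p))) - c₀ = b.repr.symm (e2 (e1 p)) := by
    intro p
    show c₀ + b.repr.symm (e2 (e1 p)) - c₀ = _
    abel
  have hcoord : ∀ p : ℝ × ℝ, b.repr (b.repr.symm (e2 (e1 p))) = e2 (e1 p) := fun p =>
    b.repr.apply_symm_apply _
  refine ⟨fun p => e4 (e3 (e2 (e1 p))), ?_, ?_, ?_, ?_⟩
  · exact h4.comp (h3.comp (h2.comp h1))
  · exact ((e1.trans e2).trans (e3.trans e4)).measurableEmbedding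
  · intro p
    rw [key]
    rw [b.repr.symm.norm_map]
    rw [EuclideanSpace.norm_eq]
    have : ∀ i, e2 (e1 p) i = ![p.1, p.2] i := fun i => rfl
    rw [Fin.sum_univ_two]
    simp [this]
  · intro p
    rw [key]
    have : inner ℝ (b.repr.symm (e2 (e1 p))) n = (inner ℝ n (b.repr.symm (e2 (e1 p))) : ℝ) :=
      real_inner_comm _ _
    rw [this, ← hb, ← b.repr_apply_apply, hcoord]
    rfl

lemma lint_ofReal_Ioo {f : ℝ → ℝ} {a b : ℝ} (hab : a ≤ b)
    (hf : IntervalIntegrable f volume a b) (h0 : ∀ x ∈ Ioo a b, 0 ≤ f x) :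
    ∫⁻ x in Ioo a b, ENNReal.ofReal (f x) = ENNReal.ofReal (∫ x in a..b, f x) := by
  rw [intervalIntegral.integral_of_le hab, MeasureTheory.integral_Ioc_eq_integral_Ioo]
  rw [ofReal_integral_eq_lintegral_ofReal]
  · exact (hf.1.mono_set Ioo_subset_Ioc_self)
  · exact ae_restrict_of_forall_mem measurableSet_Ioo h0

lemma neg_flip (G : ℝ → ENNReal) (T : ℝ) :
    ∫⁻ x in Ioo (-T) 0, G |x| = ∫⁻ x in Ioo 0 T, G |x| := by
  have hpre : (Neg.neg : ℝ → ℝ) ⁻¹' (Ioo (-T) 0) = Ioo 0 T := by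
    ext x
    constructor
    · rintro ⟨h1, h2⟩
      exact ⟨by linarith, by linarith⟩
    · rintro ⟨h1, h2⟩
      exact ⟨by linarith, by linarith⟩
  have key := (Measure.measurePreserving_neg (volume : Measure ℝ)).setLIntegral_comp_preimage_emb
    (MeasurableEquiv.neg ℝ).measurableEmbedding (fun y => G |y|) (Ioo (-T) 0)
  rw [hpre] at key
  rw [← key]
  refine setLIntegral_congr_fun measurableSet_Ioo ?_
  intro x _
  dsimp only
  rw [abs_neg]

lemma lintegral_abs_helper (G : ℝ → ENNReal) (T : ℝ) :
    ∫⁻ x in Ioo (-T) T, G |x| ≤ 2 * ∫⁻ x in Ioo 0 T, G x := by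
  have hsub : Ioo (-T) T ⊆ Ioo (-T) 0 ∪ Ico 0 T := by
    intro x hx
    rcases lt_or_ge x 0 with h | h
    · exact Or.inl ⟨hx.1, h⟩
    · exact Or.inr ⟨h, hx.2⟩
  have habs : ∫⁻ x in Ioo 0 T, G |x| = ∫⁻ x in Ioo 0 T, G x := by
    refine setLIntegral_congr_fun measurableSet_Ioo ?_
    intro x hx
    dsimp only
    rw [abs_of_pos hx.1]
  calc ∫⁻ x in Ioo (-T) T, G |x| ≤ ∫⁻ x in Ioo (-T) 0 ∪ Ico 0 T, G |x| :=
        lintegral_mono_set hsub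
    _ ≤ (∫⁻ x in Ioo (-T) 0, G |x|) + ∫⁻ x in Ico 0 T, G |x| := lintegral_union_le _ _ _
    _ = (∫⁻ x in Ioo 0 T, G x) + ∫⁻ x in Ioo 0 T, G x := by
        rw [neg_flip, habs, setLIntegral_congr (Ioo_ae_eq_Ico (a := (0:ℝ)) (b := T)).symm, habs]
    _ = 2 * ∫⁻ x in Ioo 0 T, G x := by ring

lemma lint_inv (m R' : ℝ) (hm : 0 < m) (hmR : m ≤ R') :
    ∫⁻ v in Ioo m R', ENNReal.ofReal v⁻¹ = ENNReal.ofReal (Real.log R' - Real.log m) := by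
  rw [lint_ofReal_Ioo hmR]
  · rw [integral_inv (by rw [Set.uIcc_of_le hmR]; rintro ⟨h1, h2⟩; linarith)]
    rw [Real.log_div (by linarith) (by linarith)]
  · refine ContinuousOn.intervalIntegrable (continuousOn_id.inv₀ ?_)
    intro x hx
    rw [Set.uIcc_of_le hmR] at hx
    have : 0 < x := lt_of_lt_of_le hm hx.1
    exact ne_of_gt this
  · intro x hx
    have : 0 < x := hm.trans hx.1
    positivity

lemma lint_shift_inv (ε T : ℝ) (hε : 0 < ε) (hT : 0 ≤ T) :
    ∫⁻ x in Ioo 0 T, ENNReal.ofReal (ε + x)⁻¹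
      = ENNReal.ofReal (Real.log (T + ε) - Real.log ε) := by
  have hcont : ContinuousOn (fun x : ℝ => (ε + x)⁻¹) (Set.uIcc 0 T) := by
    refine ContinuousOn.inv₀ (by fun_prop) ?_
    intro x hx
    rw [Set.uIcc_of_le hT] at hx
    have : 0 ≤ x := hx.1
    positivity
  rw [lint_ofReal_Ioo hT hcont.intervalIntegrable]
  · have h1 : ∀ x : ℝ, (ε + x)⁻¹ = (fun y : ℝ => y⁻¹) (x + ε) := by
      intro x; simp [add_comm]
    have h2 : (∫ x in (0:ℝ)..T, (ε + x)⁻¹) = ∫ x in (0:ℝ)..T, (fun y : ℝ => y⁻¹) (x + ε) := by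
      simp [add_comm]
    rw [h2, intervalIntegral.integral_comp_add_right (fun y : ℝ => y⁻¹) ε]
    rw [zero_add, integral_inv (by rw [Set.uIcc_of_le (by linarith)]; rintro ⟨h1', h2'⟩; linarith)]
    rw [Real.log_div (by linarith) (by linarith)]
  · intro x hx
    have : 0 < x := hx.1
    positivity

lemma lint_rpow_eps (δ ε' : ℝ) (hδ : 0 < δ) (hδ1 : δ < 1) (hε' : 0 ≤ ε') :
    ∫⁻ x in Ioo 0 ε', ENNReal.ofReal (x ^ (-δ))
      = ENNReal.ofReal (ε' ^ (1 - δ) / (1 - δ)) := by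
  rw [lint_ofReal_Ioo hε' (intervalIntegral.intervalIntegrable_rpow' (by linarith))]
  · rw [integral_rpow (Or.inl (by linarith))]
    rw [Real.zero_rpow (by intro h; linarith [h])]
    ring_nf
  · intro x hx
    exact Real.rpow_nonneg hx.1.le _

lemma flipIoo (G : ℝ → ENNReal) (a b : ℝ) :
    ∫⁻ y in Ioo a b, G y = ∫⁻ x in Ioo (-b) (-a), G (-x) := by
  have hpre : (Neg.neg : ℝ → ℝ) ⁻¹' (Ioo a b) = Ioo (-b) (-a) := by
    ext x
    constructor
    · rintro ⟨h1, h2⟩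
      exact ⟨by linarith, by linarith⟩
    · rintro ⟨h1, h2⟩
      exact ⟨by linarith, by linarith⟩
  have key := (Measure.measurePreserving_neg (volume : Measure ℝ)).setLIntegral_comp_preimage_emb
    (MeasurableEquiv.neg ℝ).measurableEmbedding G (Ioo a b)
  rw [hpre] at key
  exact key.symm

lemma innerA (R u : ℝ) (hu : u ≠ 0) (huR : |u| < R) :
    ∫⁻ v in Ioo (-R) R, ENNReal.ofReal (Real.sqrt (u ^ 2 + v ^ 2))⁻¹
      ≤ ENNReal.ofReal (2 + 2 * (Real.log R - Real.log |u|)) := by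
  have hu0 : 0 < |u| := abs_pos.mpr hu
  have hd0 : 0 ≤ Real.log R - Real.log |u| := by
    have := Real.log_le_log hu0 huR.le
    linarith
  set g : ℝ → ENNReal := fun v => ENNReal.ofReal (if |v| ≤ |u| then |u|⁻¹ else |v|⁻¹) with hg
  have hptwise : ∀ v, ENNReal.ofReal (Real.sqrt (u ^ 2 + v ^ 2))⁻¹ ≤ g v := by
    intro v
    apply ENNReal.ofReal_le_ofReal
    by_cases h : |v| ≤ |u|
    · rw [if_pos h]
      apply inv_anti₀ hu0
      rw [← Real.sqrt_sq_eq_abs]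
      apply Real.sqrt_le_sqrt
      nlinarith [sq_nonneg v]
    · rw [if_neg h]
      push_neg at h
      apply inv_anti₀ (hu0.trans h)
      rw [← Real.sqrt_sq_eq_abs]
      apply Real.sqrt_le_sqrt
      nlinarith [sq_nonneg u]
  have hsub : Ioo (-R) R ⊆ Icc (-|u|) |u| ∪ (Ioo (-R) (-|u|) ∪ Ioo (|u|) R) := by
    intro v hv
    by_cases h : |v| ≤ |u|
    · exact Or.inl ⟨neg_le_of_abs_le h, le_of_abs_le h⟩
    · push_neg at h
      rcases le_or_gt 0 v with h0 | h0
      · right; right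
        rw [abs_of_nonneg h0] at h
        exact ⟨h, hv.2⟩
      · right; left
        rw [abs_of_neg h0] at h
        exact ⟨hv.1, by linarith⟩
  have h1 : ∫⁻ v in Icc (-|u|) (|u|), g v ≤ ENNReal.ofReal 2 := by
    have : ∀ v ∈ Icc (-|u|) (|u|), g v = ENNReal.ofReal |u|⁻¹ := by
      intro v hv
      rw [hg]
      simp only
      rw [if_pos (abs_le.mpr ⟨hv.1, hv.2⟩)]
    rw [setLIntegral_congr_fun measurableSet_Icc this]
    rw [setLIntegral_const, Real.volume_Icc]
    rw [← ENNReal.ofReal_mul (by positivity)]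
    apply ENNReal.ofReal_le_ofReal
    rw [show |u| - -|u| = 2 * |u| by ring]
    rw [show |u|⁻¹ * (2 * |u|) = 2 * (|u| * |u|⁻¹) by ring, mul_inv_cancel₀ (ne_of_gt hu0)]
    norm_num
  have h2 : ∫⁻ v in Ioo (|u|) R, g v = ENNReal.ofReal (Real.log R - Real.log |u|) := by
    have : ∀ v ∈ Ioo (|u|) R, g v = ENNReal.ofReal v⁻¹ := by
      intro v hv
      rw [hg]
      simp only
      rw [if_neg (by push_neg; rw [abs_of_pos (hu0.trans hv.1)]; exact hv.1), 
          abs_of_pos (hu0.trans hv.1)]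
    rw [setLIntegral_congr_fun measurableSet_Ioo this]
    exact lint_inv _ _ hu0 huR.le
  have h3 : ∫⁻ v in Ioo (-R) (-|u|), g v = ENNReal.ofReal (Real.log R - Real.log |u|) := by
    rw [show Ioo (-R) (-|u|) = Ioo (-R) (-|u|) from rfl]
    rw [show (-R : ℝ) = -R from rfl]
    rw [flipIoo g (-R) (-|u|)]
    simp only [neg_neg]
    have : ∀ v ∈ Ioo (|u|) R, g (-v) = ENNReal.ofReal v⁻¹ := by
      intro v hv
      rw [hg]
      simp only [abs_neg]
      rw [if_neg (by push_neg; rw [abs_of_pos (hu0.trans hv.1)]; exact hv.1),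
          abs_of_pos (hu0.trans hv.1)]
    rw [setLIntegral_congr_fun measurableSet_Ioo this]
    exact lint_inv _ _ hu0 huR.le
  calc ∫⁻ v in Ioo (-R) R, ENNReal.ofReal (Real.sqrt (u ^ 2 + v ^ 2))⁻¹
      ≤ ∫⁻ v in Ioo (-R) R, g v := lintegral_mono hptwise
    _ ≤ ∫⁻ v in Icc (-|u|) (|u|) ∪ (Ioo (-R) (-|u|) ∪ Ioo (|u|) R), g v := lintegral_mono_set hsub
    _ ≤ (∫⁻ v in Icc (-|u|) (|u|), g v) + ∫⁻ v in Ioo (-R) (-|u|) ∪ Ioo (|u|) R, g v :=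
        lintegral_union_le _ _ _
    _ ≤ (∫⁻ v in Icc (-|u|) (|u|), g v) + ((∫⁻ v in Ioo (-R) (-|u|), g v) + ∫⁻ v in Ioo (|u|) R, g v) := by
        gcongr
        exact lintegral_union_le _ _ _
    _ ≤ ENNReal.ofReal 2 + (ENNReal.ofReal (Real.log R - Real.log |u|) + ENNReal.ofReal (Real.log R - Real.log |u|)) := by
        rw [h2, h3]
        gcongr
    _ = ENNReal.ofReal (2 + 2 * (Real.log R - Real.log |u|)) := by
        rw [← ENNReal.ofReal_add hd0 hd0, ← ENNReal.ofReal_add (by norm_num) (by linarith)]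
        ring_nf

lemma neg_log_le_rpow {x δ : ℝ} (hx : 0 < x) (hδ : 0 < δ) :
    -Real.log x ≤ x ^ (-δ) / δ := by
  have h1 : Real.log ((x⁻¹) ^ δ) ≤ (x⁻¹) ^ δ - 1 :=
    Real.log_le_sub_one_of_pos (Real.rpow_pos_of_pos (by positivity) _)
  rw [Real.log_rpow (by positivity)] at h1
  rw [Real.log_inv] at h1
  have h2 : (x⁻¹) ^ δ = x ^ (-δ) := by
    rw [Real.inv_rpow hx.le, Real.rpow_neg hx.le]
  rw [h2] at h1
  have h3 : δ * -Real.log x ≤ x ^ (-δ) := by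
    have : (0:ℝ) < x ^ (-δ) := Real.rpow_pos_of_pos hx _
    linarith
  rw [div_eq_inv_mul, ← mul_le_mul_iff_right₀ hδ]
  calc δ * -Real.log x ≤ x ^ (-δ) := h3
    _ = δ * (δ⁻¹ * x ^ (-δ)) := by
        rw [← mul_assoc, mul_inv_cancel₀ (ne_of_gt hδ), one_mul]

lemma translate_inv_bound (R c ε : ℝ) (hR : 0 < R) (hε : 0 < ε) (hε1 : ε < 1) :
    ∫⁻ u in Ioo (-R) R, ENNReal.ofReal (ε + |u + c|)⁻¹
      ≤ ENNReal.ofReal ((2 * (|Real.log (R + |c| + 1)| + 1)) * (1 - Real.log ε)) := by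
  set T := R + |c| with hT
  have hT0 : 0 < T := by positivity
  have hpre : (fun u : ℝ => u + c) ⁻¹' (Ioo (-R + c) (R + c)) = Ioo (-R) R := by
    ext x
    constructor
    · rintro ⟨h1, h2⟩
      have h1' : -R + c < x + c := h1
      have h2' : x + c < R + c := h2
      exact ⟨by linarith, by linarith⟩
    · rintro ⟨h1, h2⟩
      have h1' : -R < x := h1
      have h2' : x < R := h2
      exact ⟨by show -R + c < x + c; linarith, by show x + c < R + c; linarith⟩
  have key := (measurePreserving_add_right (volume : Measure ℝ) c).setLIntegral_comp_preimage_emb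
    (MeasurableEmbedding.id.comp (Homeomorph.addRight c).toMeasurableEquiv.measurableEmbedding)
    (fun w => ENNReal.ofReal (ε + |w|)⁻¹) (Ioo (-R + c) (R + c))
  rw [hpre] at key
  have step1 : ∫⁻ u in Ioo (-R) R, ENNReal.ofReal (ε + |u + c|)⁻¹
      = ∫⁻ w in Ioo (-R + c) (R + c), ENNReal.ofReal (ε + |w|)⁻¹ := key
  have step2 : ∫⁻ w in Ioo (-R + c) (R + c), ENNReal.ofReal (ε + |w|)⁻¹
      ≤ ∫⁻ w in Ioo (-T) T, ENNReal.ofReal (ε + |w|)⁻¹ := by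
    apply lintegral_mono_set
    intro x hx
    constructor
    · cases' abs_cases c with h h <;> [linarith [hx.1]; linarith [hx.1]]
    · cases' abs_cases c with h h <;> [linarith [hx.2]; linarith [hx.2]]
  have step3 : ∫⁻ w in Ioo (-T) T, ENNReal.ofReal (ε + |w|)⁻¹
      ≤ 2 * ∫⁻ x in Ioo 0 T, ENNReal.ofReal (ε + x)⁻¹ :=
    lintegral_abs_helper (fun x => ENNReal.ofReal (ε + x)⁻¹) T
  rw [step1]
  refine (step2.trans step3).trans ?_
  rw [lint_shift_inv ε T hε hT0.le]
  rw [show (2 : ENNReal) = ENNReal.ofReal 2 by norm_num]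
  rw [← ENNReal.ofReal_mul (by norm_num)]
  apply ENNReal.ofReal_le_ofReal
  have hlog1 : Real.log (T + ε) ≤ |Real.log (T + 1)| := by
    calc Real.log (T + ε) ≤ Real.log (T + 1) := Real.log_le_log (by positivity) (by linarith)
      _ ≤ |Real.log (T + 1)| := le_abs_self _
  have hL : 0 < 1 - Real.log ε := by
    have : Real.log ε < 0 := Real.log_neg hε hε1
    linarith
  have hA : 0 ≤ |Real.log (T + 1)| := abs_nonneg _
  have hneg : (0:ℝ) ≤ -Real.log ε := by
    have : Real.log ε < 0 := Real.log_neg hε hε1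
    linarith
  nlinarith [hlog1, hA, mul_nonneg hA hneg]

lemma log_quarter_bound {ε : ℝ} (hε : 0 < ε) (hε4 : ε < 1/4) :
    (4:ℝ)/3 < -Real.log ε := by
  have h2 : Real.log ε < Real.log (1/4) := Real.log_lt_log hε hε4
  have h4 : Real.log (1/4) = -(2 * Real.log 2) := by
    rw [show (1/4 : ℝ) = (2^(2:ℕ))⁻¹ by norm_num, Real.log_inv, Real.log_pow]
    push_cast
    ring
  have hl2 : (0.6931471803 : ℝ) < Real.log 2 := Real.log_two_gt_d9
  rw [h4] at h2
  linarith

lemma small_piece (R c ε : ℝ) (hR : 0 < R) (hε : 0 < ε) (hε4 : ε < 1/4) :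
    ∫⁻ u in Ioo (-ε) ε,
        ENNReal.ofReal (ε + |u + c|)⁻¹ *
          ENNReal.ofReal (2 + 2 * (Real.log R - Real.log |u|))
      ≤ ENNReal.ofReal ((4 + 4 * |Real.log R| + 16 * Real.exp 1) * (1 - Real.log ε)) := by
  set L : ℝ := -Real.log ε with hL
  have hL43 : (4:ℝ)/3 < L := log_quarter_bound hε hε4
  have hL0 : 0 < L := by linarith
  set δ : ℝ := L⁻¹ with hδdef
  have hδ0 : 0 < δ := by positivity
  have hδ34 : δ ≤ 3/4 := by
    rw [hδdef]
    rw [inv_le_comm₀ (by linarith) (by norm_num)]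
    linarith
  have hδ1 : δ < 1 := by linarith
  set a : ℝ := 2 + 2 * |Real.log R| with ha
  have ha0 : 0 ≤ a := by positivity
  set b : ℝ := 2 / δ with hb
  have hb0 : 0 ≤ b := by positivity
  -- pointwise bound
  have hpt : ∀ u ∈ Ioo (-ε) ε,
      ENNReal.ofReal (ε + |u + c|)⁻¹ * ENNReal.ofReal (2 + 2 * (Real.log R - Real.log |u|))
        ≤ ENNReal.ofReal ε⁻¹ * (ENNReal.ofReal a + ENNReal.ofReal b * ENNReal.ofReal (|u| ^ (-δ))) := by
    intro u _
    have h1 : ENNReal.ofReal (ε + |u + c|)⁻¹ ≤ ENNReal.ofReal ε⁻¹ := by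
      apply ENNReal.ofReal_le_ofReal
      apply inv_anti₀ hε
      have := abs_nonneg (u + c)
      linarith
    have h2 : ENNReal.ofReal (2 + 2 * (Real.log R - Real.log |u|))
        ≤ ENNReal.ofReal a + ENNReal.ofReal b * ENNReal.ofReal (|u| ^ (-δ)) := by
      rw [← ENNReal.ofReal_mul hb0, ← ENNReal.ofReal_add ha0 (by positivity)]
      apply ENNReal.ofReal_le_ofReal
      have hRabs : Real.log R ≤ |Real.log R| := le_abs_self _
      by_cases hu : u = 0
      · subst hu
        simp only [abs_zero, Real.log_zero]
        have : (0:ℝ) ≤ b * (0:ℝ) ^ (-δ) := by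
          rw [Real.zero_rpow (by intro h; exact absurd h.symm (ne_of_lt (by linarith)))]
          simp
        rw [ha]
        simp only [sub_zero]
        nlinarith
      · have hu0 : 0 < |u| := abs_pos.mpr hu
        have := neg_log_le_rpow hu0 hδ0
        rw [ha, hb]
        have hbnn : (0:ℝ) ≤ |u| ^ (-δ) := Real.rpow_nonneg hu0.le _
        have : 2 / δ * |u| ^ (-δ) = 2 * (|u| ^ (-δ) / δ) := by ring
        nlinarith [neg_log_le_rpow hu0 hδ0]
    exact mul_le_mul' h1 h2
  calc ∫⁻ u in Ioo (-ε) ε,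
        ENNReal.ofReal (ε + |u + c|)⁻¹ * ENNReal.ofReal (2 + 2 * (Real.log R - Real.log |u|))
      ≤ ∫⁻ u in Ioo (-ε) ε,
          ENNReal.ofReal ε⁻¹ * (ENNReal.ofReal a + ENNReal.ofReal b * ENNReal.ofReal (|u| ^ (-δ))) :=
        setLIntegral_mono (by fun_prop) hpt
    _ = ENNReal.ofReal ε⁻¹ * ∫⁻ u in Ioo (-ε) ε,
          (ENNReal.ofReal a + ENNReal.ofReal b * ENNReal.ofReal (|u| ^ (-δ))) := by
        rw [lintegral_const_mul' _ _ ENNReal.ofReal_ne_top]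
    _ = ENNReal.ofReal ε⁻¹ * ((ENNReal.ofReal a * volume (Ioo (-ε) ε)) +
          ENNReal.ofReal b * ∫⁻ u in Ioo (-ε) ε, ENNReal.ofReal (|u| ^ (-δ))) := by
        congr 1
        rw [lintegral_add_left measurable_const, setLIntegral_const,
          lintegral_const_mul' _ _ ENNReal.ofReal_ne_top]
    _ ≤ ENNReal.ofReal ε⁻¹ * ((ENNReal.ofReal a * ENNReal.ofReal (2 * ε)) +
          ENNReal.ofReal b * (2 * ENNReal.ofReal (ε ^ (1 - δ) / (1 - δ)))) := by
        gcongr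
        · rw [Real.volume_Ioo]
          apply ENNReal.ofReal_le_ofReal
          linarith
        · have := lintegral_abs_helper (fun x => ENNReal.ofReal (x ^ (-δ))) ε
          rw [lint_rpow_eps δ ε hδ0 hδ1 hε.le] at this
          exact this
    _ ≤ ENNReal.ofReal ((4 + 4 * |Real.log R| + 16 * Real.exp 1) * (1 - Real.log ε)) := by
        have h1δ : (0:ℝ) < 1 - δ := by linarith
        have hq : (0:ℝ) ≤ ε ^ (1 - δ) / (1 - δ) :=
          div_nonneg (Real.rpow_nonneg hε.le _) h1δ.le
        rw [show (2 : ENNReal) = ENNReal.ofReal 2 by norm_num]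
        rw [← ENNReal.ofReal_mul ha0, ← ENNReal.ofReal_mul (by norm_num),
          ← ENNReal.ofReal_mul hb0,
          ← ENNReal.ofReal_add (by positivity) (mul_nonneg hb0 (mul_nonneg (by norm_num) hq)),
          ← ENNReal.ofReal_mul (by positivity)]
        apply ENNReal.ofReal_le_ofReal
        -- real arithmetic
        have hεpow : ε ^ (1 - δ) = ε * Real.exp 1 := by
          have h1 : ε ^ (1 - δ) = ε ^ (1:ℝ) * ε ^ (-δ) := by
            rw [← Real.rpow_add hε]
            ring_nf
          have hlne : Real.log ε ≠ 0 := ne_of_lt (Real.log_neg hε (by linarith))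
          have h2 : ε ^ (-δ) = Real.exp 1 := by
            rw [Real.rpow_def_of_pos hε]
            congr 1
            rw [hδdef, hL]
            field_simp
          rw [h1, h2, Real.rpow_one]
        have h1δ' : (0:ℝ) < 1 - δ := by linarith
        have hbL : b = 2 * L := by
          rw [hb, hδdef]
          field_simp
        have e1 : ε⁻¹ * (a * (2 * ε) + b * (2 * (ε ^ (1 - δ) / (1 - δ))))
            = 2 * a + 4 * L * Real.exp 1 / (1 - δ) := by
          rw [hεpow, hbL]
          field_simp
          ring
        rw [e1]
        have e2 : 4 * L * Real.exp 1 / (1 - δ) ≤ 16 * Real.exp 1 * L := by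
          rw [div_le_iff₀ h1δ']
          have hexp : (0:ℝ) < Real.exp 1 := Real.exp_pos 1
          have h14 : (1:ℝ)/4 ≤ 1 - δ := by linarith
          have hprod : (0:ℝ) ≤ 16 * Real.exp 1 * L := by positivity
          nlinarith [mul_le_mul_of_nonneg_left h14 hprod]
        have hexp : (0:ℝ) < Real.exp 1 := Real.exp_pos 1
        have hfin : 1 - Real.log ε = 1 + L := by rw [hL]; ring
        rw [hfin, ha]
        have habs : (0:ℝ) ≤ |Real.log R| := abs_nonneg _
        nlinarith [mul_nonneg habs hL0.le, mul_nonneg hexp.le hL0.le]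

lemma outerB (R c : ℝ) (hR : 0 < R) :
    ∃ K > (0:ℝ), ∀ ε ∈ Ioo (0:ℝ) (1/4),
      ∫⁻ u in Ioo (-R) R,
          ENNReal.ofReal (ε + |u + c|)⁻¹ *
            ENNReal.ofReal (2 + 2 * (Real.log R - Real.log |u|))
        ≤ ENNReal.ofReal (K * (1 - Real.log ε) ^ 2) := by
  set C1 : ℝ := 4 + 4 * |Real.log R| + 16 * Real.exp 1 with hC1
  set C2 : ℝ := 2 * (|Real.log (R + |c| + 1)| + 1) with hC2
  set M0 : ℝ := 2 + 2 * |Real.log R| with hM0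
  refine ⟨C1 + M0 * C2, by positivity, ?_⟩
  rintro ε ⟨hε, hε4⟩
  have hL1 : (1:ℝ) ≤ 1 - Real.log ε := by
    have : Real.log ε < 0 := Real.log_neg hε (by linarith)
    linarith
  have hL0 : (0:ℝ) < 1 - Real.log ε := by linarith
  -- split domain
  have hsub : Ioo (-R) R ⊆ Ioo (-ε) ε ∪ (Ioo (-R) R \ Ioo (-ε) ε) := by
    intro u hu
    by_cases h : u ∈ Ioo (-ε) ε
    · exact Or.inl h
    · exact Or.inr ⟨hu, h⟩
  have hsplit := lintegral_union_le (μ := (volume : Measure ℝ))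
    (fun u => ENNReal.ofReal (ε + |u + c|)⁻¹ *
      ENNReal.ofReal (2 + 2 * (Real.log R - Real.log |u|)))
    (Ioo (-ε) ε) (Ioo (-R) R \ Ioo (-ε) ε)
  have hP1 := small_piece R c ε hR hε hε4
  -- second piece
  have hP2 : ∫⁻ u in Ioo (-R) R \ Ioo (-ε) ε,
      ENNReal.ofReal (ε + |u + c|)⁻¹ *
        ENNReal.ofReal (2 + 2 * (Real.log R - Real.log |u|))
      ≤ ENNReal.ofReal (M0 * (1 - Real.log ε)) *
          ENNReal.ofReal (C2 * (1 - Real.log ε)) := by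
    have hpt : ∀ u ∈ Ioo (-R) R \ Ioo (-ε) ε,
        ENNReal.ofReal (ε + |u + c|)⁻¹ *
          ENNReal.ofReal (2 + 2 * (Real.log R - Real.log |u|))
        ≤ ENNReal.ofReal (M0 * (1 - Real.log ε)) * ENNReal.ofReal (ε + |u + c|)⁻¹ := by
      rintro u ⟨hu1, hu2⟩
      rw [mul_comm]
      apply mul_le_mul'
      · apply ENNReal.ofReal_le_ofReal
        have habs : ε ≤ |u| := by
          by_contra hcon
          push_neg at hcon
          exact hu2 ⟨(abs_lt.mp hcon).1, (abs_lt.mp hcon).2⟩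
        have hlog : Real.log ε ≤ Real.log |u| := Real.log_le_log hε habs
        have h1 : Real.log R ≤ |Real.log R| := le_abs_self _
        rw [hM0]
        nlinarith [abs_nonneg (Real.log R)]
      · exact le_refl _
    calc ∫⁻ u in Ioo (-R) R \ Ioo (-ε) ε,
          ENNReal.ofReal (ε + |u + c|)⁻¹ *
            ENNReal.ofReal (2 + 2 * (Real.log R - Real.log |u|))
        ≤ ∫⁻ u in Ioo (-R) R \ Ioo (-ε) ε,
            ENNReal.ofReal (M0 * (1 - Real.log ε)) * ENNReal.ofReal (ε + |u + c|)⁻¹ :=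
          setLIntegral_mono (by fun_prop) hpt
      _ = ENNReal.ofReal (M0 * (1 - Real.log ε)) *
            ∫⁻ u in Ioo (-R) R \ Ioo (-ε) ε, ENNReal.ofReal (ε + |u + c|)⁻¹ := by
          rw [lintegral_const_mul' _ _ ENNReal.ofReal_ne_top]
      _ ≤ ENNReal.ofReal (M0 * (1 - Real.log ε)) *
            ∫⁻ u in Ioo (-R) R, ENNReal.ofReal (ε + |u + c|)⁻¹ := by
          gcongr
          exact diff_subset
      _ ≤ ENNReal.ofReal (M0 * (1 - Real.log ε)) * ENNReal.ofReal (C2 * (1 - Real.log ε)) := by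
          gcongr
          exact translate_inv_bound R c ε hR hε (by linarith)
  calc ∫⁻ u in Ioo (-R) R,
        ENNReal.ofReal (ε + |u + c|)⁻¹ *
          ENNReal.ofReal (2 + 2 * (Real.log R - Real.log |u|))
      ≤ ∫⁻ u in Ioo (-ε) ε ∪ (Ioo (-R) R \ Ioo (-ε) ε),
          ENNReal.ofReal (ε + |u + c|)⁻¹ *
            ENNReal.ofReal (2 + 2 * (Real.log R - Real.log |u|)) := lintegral_mono_set hsub
    _ ≤ _ + _ := hsplit
    _ ≤ ENNReal.ofReal (C1 * (1 - Real.log ε)) +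
          ENNReal.ofReal (M0 * (1 - Real.log ε)) * ENNReal.ofReal (C2 * (1 - Real.log ε)) :=
        add_le_add hP1 hP2
    _ ≤ ENNReal.ofReal ((C1 + M0 * C2) * (1 - Real.log ε) ^ 2) := by
        rw [← ENNReal.ofReal_mul (by positivity)]
        rw [← ENNReal.ofReal_add (by positivity) (by positivity)]
        apply ENNReal.ofReal_le_ofReal
        have hC1' : (0:ℝ) ≤ C1 := by positivity
        have hM0' : (0:ℝ) ≤ M0 := by positivity
        have hC2' : (0:ℝ) ≤ C2 := by positivity
        have hxx : (1 - Real.log ε) ≤ (1 - Real.log ε) ^ 2 := by nlinarith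
        nlinarith [mul_le_mul_of_nonneg_left hxx hC1']

lemma core2D (R c : ℝ) (hR : 0 < R) :
    ∃ K > (0:ℝ), ∀ ε ∈ Ioo (0:ℝ) (1/4),
      ∫⁻ p : ℝ × ℝ in (Ioo (-R) R) ×ˢ (Ioo (-R) R),
          ENNReal.ofReal ((ε + |p.1 + c|)⁻¹ * (Real.sqrt (p.1 ^ 2 + p.2 ^ 2))⁻¹)
        ≤ ENNReal.ofReal (K * (1 - Real.log ε) ^ 2) := by
  obtain ⟨K, hK, hKb⟩ := outerB R c hR
  refine ⟨K, hK, ?_⟩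
  rintro ε ⟨hε, hε4⟩
  have hmeas : Measurable (fun p : ℝ × ℝ =>
      ENNReal.ofReal (ε + |p.1 + c|)⁻¹ * ENNReal.ofReal (Real.sqrt (p.1 ^ 2 + p.2 ^ 2))⁻¹) := by
    fun_prop
  have hsplitInt : ∀ p : ℝ × ℝ,
      ENNReal.ofReal ((ε + |p.1 + c|)⁻¹ * (Real.sqrt (p.1 ^ 2 + p.2 ^ 2))⁻¹)
        = ENNReal.ofReal (ε + |p.1 + c|)⁻¹ * ENNReal.ofReal (Real.sqrt (p.1 ^ 2 + p.2 ^ 2))⁻¹ := by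
    intro p
    rw [ENNReal.ofReal_mul (by positivity)]
  have hprod : (volume : Measure (ℝ × ℝ)).restrict ((Ioo (-R) R) ×ˢ (Ioo (-R) R))
      = ((volume : Measure ℝ).restrict (Ioo (-R) R)).prod
          ((volume : Measure ℝ).restrict (Ioo (-R) R)) := by
    rw [Measure.volume_eq_prod, Measure.prod_restrict]
  calc ∫⁻ p : ℝ × ℝ in (Ioo (-R) R) ×ˢ (Ioo (-R) R),
        ENNReal.ofReal ((ε + |p.1 + c|)⁻¹ * (Real.sqrt (p.1 ^ 2 + p.2 ^ 2))⁻¹)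
      = ∫⁻ p : ℝ × ℝ in (Ioo (-R) R) ×ˢ (Ioo (-R) R),
        ENNReal.ofReal (ε + |p.1 + c|)⁻¹ * ENNReal.ofReal (Real.sqrt (p.1 ^ 2 + p.2 ^ 2))⁻¹ := by
        exact lintegral_congr fun p => by rw [hsplitInt p]
    _ = ∫⁻ u in Ioo (-R) R, ∫⁻ v in Ioo (-R) R,
          ENNReal.ofReal (ε + |u + c|)⁻¹ * ENNReal.ofReal (Real.sqrt (u ^ 2 + v ^ 2))⁻¹ := by
        rw [hprod, lintegral_prod _ hmeas.aemeasurable]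
    _ = ∫⁻ u in Ioo (-R) R, ENNReal.ofReal (ε + |u + c|)⁻¹ *
          ∫⁻ v in Ioo (-R) R, ENNReal.ofReal (Real.sqrt (u ^ 2 + v ^ 2))⁻¹ := by
        refine lintegral_congr fun u => ?_
        rw [lintegral_const_mul' _ _ ENNReal.ofReal_ne_top]
    _ ≤ ∫⁻ u in Ioo (-R) R, ENNReal.ofReal (ε + |u + c|)⁻¹ *
          ENNReal.ofReal (2 + 2 * (Real.log R - Real.log |u|)) := by
        apply lintegral_mono_ae
        have hne : ∀ᵐ u : ℝ ∂(volume.restrict (Ioo (-R) R)), u ≠ 0 := by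
          refine ae_restrict_of_ae ?_
          rw [ae_iff]
          have : {u : ℝ | ¬ u ≠ 0} = {0} := by
            ext x; simp
          rw [this]
          exact Real.volume_singleton
        have hmem : ∀ᵐ u : ℝ ∂(volume.restrict (Ioo (-R) R)), u ∈ Ioo (-R) R :=
          ae_restrict_mem measurableSet_Ioo
        filter_upwards [hne, hmem] with u hu hmemu
        gcongr
        have hsqrt : ∀ v : ℝ, Real.sqrt (u ^ 2 + v ^ 2) = Real.sqrt (u ^ 2 + v ^ 2) := fun _ => rfl
        have huR : |u| < R := abs_lt.mpr ⟨hmemu.1, hmemu.2⟩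
        exact innerA R u hu huR
    _ ≤ ENNReal.ofReal (K * (1 - Real.log ε) ^ 2) := hKb ε ⟨hε, hε4⟩


lemma line_piece (c₀ A n : E2) (hn : ‖n‖ = 1) (R : ℝ) (hR : 0 < R) :
    ∃ K > (0:ℝ), ∀ ε ∈ Ioo (0:ℝ) (1/4),
      ∫⁻ x in Metric.ball c₀ R,
          ENNReal.ofReal ((ε + |(inner ℝ (x - A) n : ℝ)|)⁻¹ * ‖x - c₀‖⁻¹)
        ≤ ENNReal.ofReal (K * (1 - Real.log ε) ^ 2) := by
  obtain ⟨φ, hφ, hemb, hnorm, hinner⟩ := exists_coords n hn c₀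
  set c : ℝ := inner ℝ (c₀ - A) n with hc
  obtain ⟨K, hK, hKb⟩ := core2D R c hR
  refine ⟨K, hK, ?_⟩
  rintro ε ⟨hε, hε4⟩
  have key := hφ.setLIntegral_comp_preimage_emb hemb
    (fun x => ENNReal.ofReal ((ε + |(inner ℝ (x - A) n : ℝ)|)⁻¹ * ‖x - c₀‖⁻¹)) (Metric.ball c₀ R)
  rw [← key]
  have hval : ∀ p : ℝ × ℝ,
      ENNReal.ofReal ((ε + |(inner ℝ (φ p - A) n : ℝ)|)⁻¹ * ‖φ p - c₀‖⁻¹)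
        = ENNReal.ofReal ((ε + |p.1 + c|)⁻¹ * (Real.sqrt (p.1 ^ 2 + p.2 ^ 2))⁻¹) := by
    intro p
    have h1 : (inner ℝ (φ p - A) n : ℝ) = p.1 + c := by
      have : φ p - A = (φ p - c₀) + (c₀ - A) := by abel
      rw [this, inner_add_left, hinner p, hc]
    rw [h1, hnorm p]
  have hsub : φ ⁻¹' (Metric.ball c₀ R) ⊆ (Ioo (-R) R) ×ˢ (Ioo (-R) R) := by
    intro p hp
    have hd : ‖φ p - c₀‖ < R := by
      have := Metric.mem_ball.mp hp
      rwa [dist_eq_norm] at this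
    rw [hnorm p] at hd
    have h1 : |p.1| < R := by
      have : |p.1| ≤ Real.sqrt (p.1 ^ 2 + p.2 ^ 2) := by
        rw [← Real.sqrt_sq_eq_abs]
        exact Real.sqrt_le_sqrt (by nlinarith [sq_nonneg p.2])
      linarith
    have h2 : |p.2| < R := by
      have : |p.2| ≤ Real.sqrt (p.1 ^ 2 + p.2 ^ 2) := by
        rw [← Real.sqrt_sq_eq_abs]
        exact Real.sqrt_le_sqrt (by nlinarith [sq_nonneg p.1])
      linarith
    exact ⟨⟨(abs_lt.mp h1).1, (abs_lt.mp h1).2⟩, ⟨(abs_lt.mp h2).1, (abs_lt.mp h2).2⟩⟩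
  calc ∫⁻ p in φ ⁻¹' (Metric.ball c₀ R),
        ENNReal.ofReal ((ε + |(inner ℝ (φ p - A) n : ℝ)|)⁻¹ * ‖φ p - c₀‖⁻¹)
      = ∫⁻ p in φ ⁻¹' (Metric.ball c₀ R),
          ENNReal.ofReal ((ε + |p.1 + c|)⁻¹ * (Real.sqrt (p.1 ^ 2 + p.2 ^ 2))⁻¹) :=
        lintegral_congr fun p => hval p
    _ ≤ ∫⁻ p : ℝ × ℝ in (Ioo (-R) R) ×ˢ (Ioo (-R) R),
          ENNReal.ofReal ((ε + |p.1 + c|)⁻¹ * (Real.sqrt (p.1 ^ 2 + p.2 ^ 2))⁻¹) :=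
        lintegral_mono_set hsub
    _ ≤ ENNReal.ofReal (K * (1 - Real.log ε) ^ 2) := hKb ε ⟨hε, hε4⟩
end AuxCWIE

/-- **Lemma 3.5, first estimate (exceptional case `β = 1/2`).**
Let `Ω ⊂ ℝ²` be a convex polygonal domain, `c₀` a vertex of `Ω` (the common endpoint
of the two boundary edges `[c₀,p]` and `[c₀,q]`), and `R > 0` such that the closed
ball of radius `R` around `c₀` meets `∂Ω` only in these two edges. For `c_I > 1`
there is `c > 0` such that for all `h ∈ (0,1/2)`, with `σ_h(x) = c_I h² + dist(x,∂Ω)`: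
`∫_{Ω ∩ B(c₀,R)} σ_h(x)⁻¹ |x-c₀|⁻¹ dx ≤ c |ln h|²`. -/
theorem corner_weight_integral_estimate_half (Ω : Set (EuclideanSpace ℝ (Fin 2)))
    (hΩ : IsConvexPolygonalDomain Ω)
    (c₀ p q : EuclideanSpace ℝ (Fin 2)) (R : ℝ) (hR : 0 < R)
    (hc₀ : c₀ ∈ frontier Ω)
    (hp : segment ℝ c₀ p ⊆ frontier Ω) (hq : segment ℝ c₀ q ⊆ frontier Ω)
    (hp0 : p ≠ c₀) (hq0 : q ≠ c₀) (hcorner : ¬ Collinear ℝ ({p, c₀, q} : Set _))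
    (hball : Metric.closedBall c₀ R ∩ frontier Ω ⊆ segment ℝ c₀ p ∪ segment ℝ c₀ q)
    (cI : ℝ) (hcI : 1 < cI) :
    ∃ c > (0 : ℝ), ∀ h ∈ Set.Ioo (0 : ℝ) (1 / 2),
      ∫⁻ x in Ω ∩ Metric.ball c₀ R,
          ENNReal.ofReal
            ((cI * h ^ 2 + Metric.infDist x (frontier Ω))⁻¹ * ‖x - c₀‖⁻¹)
        ≤ ENNReal.ofReal (c * |Real.log h| ^ 2) := by
  obtain ⟨hopen, hconv, hbdd, N, A, B, hfront⟩ := hΩ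
  -- nonempty index
  have hc₀' := hc₀
  rw [hfront] at hc₀'
  obtain ⟨i₀, hi₀⟩ := mem_iUnion.mp hc₀'
  haveI : Nonempty (Fin N) := ⟨i₀⟩
  -- unit normals
  choose ν hν1 hν2 using fun i => exists_unit_normal (B i - A i)
  -- min function
  set a : Fin N → E2 → ℝ := fun i x => |(inner ℝ (x - A i) (ν i) : ℝ)| with ha
  have hmin_le : ∀ x : E2, ∀ y ∈ frontier Ω,
      Finset.univ.inf' Finset.univ_nonempty (fun i => a i x) ≤ dist x y := by
    intro x y hy
    rw [hfront] at hy
    obtain ⟨i, hi⟩ := mem_iUnion.mp hy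
    obtain ⟨s, t, hs, ht, hst, hy'⟩ := hi
    have hinner0 : (inner ℝ (y - A i) (ν i) : ℝ) = 0 := by
      have hyA : y - A i = t • (B i - A i) := by
        rw [← hy']
        have : s = 1 - t := by linarith
        rw [this]
        module
      rw [hyA, inner_smul_left]
      rw [hν2 i]
      simp
    have hkey : a i x ≤ dist x y := by
      have h1 : (inner ℝ (x - A i) (ν i) : ℝ) = inner ℝ (x - y) (ν i) + inner ℝ (y - A i) (ν i) := by
        rw [← inner_add_left]
        congr 1
        abel
      rw [ha]
      simp only
      rw [h1, hinner0, add_zero]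
      calc |(inner ℝ (x - y) (ν i) : ℝ)| ≤ ‖x - y‖ * ‖ν i‖ := abs_real_inner_le_norm _ _
        _ = dist x y := by rw [hν1 i, mul_one, dist_eq_norm]
    exact le_trans (Finset.inf'_le _ (Finset.mem_univ i)) hkey
  have hfront_ne : (frontier Ω).Nonempty := ⟨c₀, hc₀⟩
  have hlow : ∀ x : E2,
      Finset.univ.inf' Finset.univ_nonempty (fun i => a i x) ≤ Metric.infDist x (frontier Ω) := by
    intro x
    by_contra hcon
    push_neg at hcon
    obtain ⟨y, hy, hdy⟩ := (Metric.infDist_lt_iff hfront_ne).mp hcon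
    exact absurd (hmin_le x y hy) (by linarith)
  -- per-line constants
  choose K hKpos hKb using fun i => line_piece c₀ (A i) (ν i) (hν1 i) R hR
  set Ktot : ℝ := ∑ i, K i with hKtot
  have hKtot0 : 0 < Ktot := Finset.sum_pos (fun i _ => hKpos i) Finset.univ_nonempty
  refine ⟨16 * Ktot, by positivity, ?_⟩
  rintro h ⟨hh0, hh2⟩
  set ε : ℝ := h ^ 2 with hε
  have hε0 : 0 < ε := by positivity
  have hε4 : ε < 1/4 := by
    rw [hε]
    nlinarith
  -- pointwise bound
  have hpt : ∀ x : E2,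
      ENNReal.ofReal ((cI * h ^ 2 + Metric.infDist x (frontier Ω))⁻¹ * ‖x - c₀‖⁻¹)
        ≤ ∑ i, ENNReal.ofReal ((ε + a i x)⁻¹ * ‖x - c₀‖⁻¹) := by
    intro x
    have hm0 : 0 ≤ Finset.univ.inf' Finset.univ_nonempty (fun i => a i x) := by
      apply Finset.le_inf'
      intro i _
      exact abs_nonneg _
    obtain ⟨j, _, hj⟩ := Finset.exists_mem_eq_inf' Finset.univ_nonempty (fun i => a i x)
    have hstep1 : (cI * h ^ 2 + Metric.infDist x (frontier Ω))⁻¹ ≤ (ε + a j x)⁻¹ := by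
      apply inv_anti₀
      · have : 0 ≤ a j x := abs_nonneg _
        positivity
      · have h1 : ε ≤ cI * h ^ 2 := by
          rw [hε]
          nlinarith
        have h2 : a j x ≤ Metric.infDist x (frontier Ω) := by
          rw [← hj]
          exact hlow x
        linarith
    have hstep2 : (ε + a j x)⁻¹ ≤ ∑ i, (ε + a i x)⁻¹ := by
      apply Finset.single_le_sum (f := fun i => (ε + a i x)⁻¹)
      · intro i _
        have : 0 ≤ a i x := abs_nonneg _
        positivity
      · exact Finset.mem_univ j
    calc ENNReal.ofReal ((cI * h ^ 2 + Metric.infDist x (frontier Ω))⁻¹ * ‖x - c₀‖⁻¹)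
        ≤ ENNReal.ofReal ((∑ i, (ε + a i x)⁻¹) * ‖x - c₀‖⁻¹) := by
          apply ENNReal.ofReal_le_ofReal
          apply mul_le_mul_of_nonneg_right (le_trans hstep1 hstep2) (by positivity)
      _ = ∑ i, ENNReal.ofReal ((ε + a i x)⁻¹ * ‖x - c₀‖⁻¹) := by
          rw [Finset.sum_mul]
          rw [ENNReal.ofReal_sum_of_nonneg]
          intro i _
          have : 0 ≤ a i x := abs_nonneg _
          positivity
  -- measurability of each summand
  have hmeas : ∀ i : Fin N, Measurable (fun x : E2 =>
      ENNReal.ofReal ((ε + a i x)⁻¹ * ‖x - c₀‖⁻¹)) := by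
    intro i
    apply Measurable.ennreal_ofReal
    apply Measurable.mul
    · apply Measurable.inv
      apply Measurable.add measurable_const
      apply Measurable.abs
      have : Continuous (fun x : E2 => (inner ℝ (x - A i) (ν i) : ℝ)) :=
        (continuous_id.sub continuous_const).inner continuous_const
      exact this.measurable
    · apply Measurable.inv
      exact (continuous_id.sub continuous_const).norm.measurable
  calc ∫⁻ x in Ω ∩ Metric.ball c₀ R,
        ENNReal.ofReal ((cI * h ^ 2 + Metric.infDist x (frontier Ω))⁻¹ * ‖x - c₀‖⁻¹)
      ≤ ∫⁻ x in Ω ∩ Metric.ball c₀ R, ∑ i, ENNReal.ofReal ((ε + a i x)⁻¹ * ‖x - c₀‖⁻¹) :=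
        lintegral_mono fun x => hpt x
    _ ≤ ∫⁻ x in Metric.ball c₀ R, ∑ i, ENNReal.ofReal ((ε + a i x)⁻¹ * ‖x - c₀‖⁻¹) :=
        lintegral_mono_set inter_subset_right
    _ = ∑ i, ∫⁻ x in Metric.ball c₀ R, ENNReal.ofReal ((ε + a i x)⁻¹ * ‖x - c₀‖⁻¹) :=
        lintegral_finset_sum _ (fun i _ => hmeas i)
    _ ≤ ∑ i, ENNReal.ofReal (K i * (1 - Real.log ε) ^ 2) := by
        apply Finset.sum_le_sum
        intro i _
        exact hKb i ε ⟨hε0, hε4⟩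
    _ ≤ ENNReal.ofReal (16 * Ktot * |Real.log h| ^ 2) := by
        rw [← ENNReal.ofReal_sum_of_nonneg (fun i _ => mul_nonneg (hKpos i).le (sq_nonneg _))]
        apply ENNReal.ofReal_le_ofReal
        rw [← Finset.sum_mul]
        -- real arithmetic : Ktot * (1 - log ε)^2 ≤ 16 Ktot |log h|^2
        have hlogh : Real.log h < -Real.log 2 := by
          have := Real.log_lt_log hh0 hh2
          rw [show (1/2 : ℝ) = 2⁻¹ by norm_num, Real.log_inv] at this
          linarith
        have hl2 : (0.6931471803 : ℝ) < Real.log 2 := Real.log_two_gt_d9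
        have habs : |Real.log h| = -Real.log h := abs_of_neg (by linarith)
        have hlogε : Real.log ε = 2 * Real.log h := by
          rw [hε, Real.log_pow]
          push_cast
          ring
        have hx : 1 - Real.log ε = 1 + 2 * |Real.log h| := by
          rw [hlogε, habs]
          ring
        rw [hx]
        have h1 : 1 + 2 * |Real.log h| ≤ 4 * |Real.log h| := by
          rw [habs]
          linarith
        have h2 : (1 + 2 * |Real.log h|) ^ 2 ≤ 16 * |Real.log h| ^ 2 := by
          have h0 : 0 ≤ 1 + 2 * |Real.log h| := by positivity
          nlinarith
        calc Ktot * (1 + 2 * |Real.log h|) ^ 2 ≤ Ktot * (16 * |Real.log h| ^ 2) := by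
              apply mul_le_mul_of_nonneg_left h2 hKtot0.le
          _ = 16 * Ktot * |Real.log h| ^ 2 := by ring
end

section
/- Let Ω ⊂ ℝ² be a polygonal domain. Then there exists a constant c > 0 such that for all h ∈ (0,1/2), one has ∫_{{x ∈ Ω : dist(x,∂Ω) ≥ h²}} dist(x, ∂Ω)^{-1} dx ≤ c |ln h|. -/
open MeasureTheory Set
open scoped ENNReal

/-- A polygonal domain: a bounded, connected, open subset of `ℝ²` whose boundary is
a finite union of closed line segments. -/
def IsPolygonalDomain (Ω : Set (EuclideanSpace ℝ (Fin 2))) : Prop :=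
  IsOpen Ω ∧ IsConnected Ω ∧ Bornology.IsBounded Ω ∧
    ∃ (n : ℕ) (A B : Fin n → EuclideanSpace ℝ (Fin 2)),
      frontier Ω = ⋃ i, segment ℝ (A i) (B i)

noncomputable section PolyAux

open Metric Real

local notation "E2" => EuclideanSpace ℝ (Fin 2)

/-- Volume of the unit ball in the plane, as a real number. -/
def polyVr : ℝ := (volume (Metric.ball (0 : EuclideanSpace ℝ (Fin 2)) 1)).toReal

lemma polyVr_pos : 0 < polyVr :=
  ENNReal.toReal_pos (measure_ball_pos volume 0 one_pos).ne' measure_ball_lt_top.ne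

lemma poly_vol_cb (x : E2) {r : ℝ} (hr : 0 ≤ r) :
    volume (Metric.closedBall x r) = ENNReal.ofReal (polyVr * r ^ 2) := by
  rw [Measure.addHaar_closedBall volume x hr, finrank_euclideanSpace, Fintype.card_fin,
    show volume (Metric.ball (0 : E2) 1) = ENNReal.ofReal polyVr from
      (ENNReal.ofReal_toReal measure_ball_lt_top.ne).symm,
    ← ENNReal.ofReal_mul (by positivity), mul_comm]

lemma poly_isCompact_segment (a b : E2) : IsCompact (segment ℝ a b) := by
  rw [segment_eq_image']
  exact isCompact_Icc.image (by continuity)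

/-- Measure of the `t`-neighborhood of a segment is `O(t)` for `t ∈ (0,1]`. -/
lemma poly_seg_bound (a b : E2) :
    ∃ C > 0, ∀ t ∈ Set.Ioc (0:ℝ) 1,
      volume {x : E2 | Metric.infDist x (segment ℝ a b) ≤ t} ≤ ENNReal.ofReal (C * t) := by
  have hVr := polyVr_pos
  refine ⟨4 * polyVr * (dist a b + 3), by positivity, fun t ht => ?_⟩
  obtain ⟨ht0, ht1⟩ := ht
  set L : ℝ := dist a b with hL
  have hL0 : 0 ≤ L := dist_nonneg
  set N : ℕ := ⌈L / t⌉₊ + 1 with hNdef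
  have hN : 0 < (N : ℝ) := by positivity
  have hLN : L / N ≤ t := by
    rw [div_le_iff₀ hN]
    calc L = L / t * t := by field_simp
      _ ≤ (N : ℝ) * t := by
          apply mul_le_mul_of_nonneg_right _ ht0.le
          calc L / t ≤ (⌈L / t⌉₊ : ℝ) := Nat.le_ceil _
            _ ≤ N := by exact_mod_cast Nat.le_succ _
      _ = t * N := mul_comm _ _
  set p : ℕ → E2 := fun k => a + ((k : ℝ) / N) • (b - a) with hp
  have hcover : {x : E2 | Metric.infDist x (segment ℝ a b) ≤ t} ⊆
      ⋃ k : Fin (N + 1), Metric.closedBall (p k) (2 * t) := by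
    intro x hx
    obtain ⟨y, hy, hxy⟩ := (poly_isCompact_segment a b).exists_infDist_eq_dist
      ⟨a, left_mem_segment ℝ a b⟩ x
    rw [segment_eq_image'] at hy
    obtain ⟨s, hs, rfl⟩ := hy
    set k : ℕ := ⌊s * N⌋₊ with hk
    have hkN : k ≤ N := by
      have h1 : s * N ≤ (N : ℝ) := by nlinarith [hs.1, hs.2]
      calc k ≤ ⌊(N : ℝ)⌋₊ := Nat.floor_mono h1
        _ = N := Nat.floor_natCast N
    refine mem_iUnion.2 ⟨⟨k, Nat.lt_succ_of_le hkN⟩, ?_⟩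
    have hkle : (k : ℝ) / N ≤ s := by
      rw [div_le_iff₀ hN]
      exact Nat.floor_le (mul_nonneg hs.1 hN.le)
    have hkup : s - (k : ℝ) / N ≤ 1 / N := by
      have h2 : s * N < (k : ℝ) + 1 := Nat.lt_floor_add_one _
      rw [sub_le_iff_le_add, ← add_div, le_div_iff₀ hN]
      linarith
    have hdn : dist (a + s • (b - a)) (p k) ≤ t := by
      have heq : a + s • (b - a) - (a + ((k : ℝ) / N) • (b - a))
          = (s - (k : ℝ) / N) • (b - a) := by module
      rw [hp, dist_eq_norm, heq, norm_smul, Real.norm_eq_abs,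
        abs_of_nonneg (by linarith)]
      calc (s - (k : ℝ) / N) * ‖b - a‖ ≤ 1 / N * ‖b - a‖ := by
            apply mul_le_mul_of_nonneg_right hkup (norm_nonneg _)
        _ = L / N := by rw [hL, dist_comm a b, dist_eq_norm]; ring
        _ ≤ t := hLN
    simp only [Metric.mem_closedBall]
    calc dist x (p k) ≤ dist x (a + s • (b - a)) + dist (a + s • (b - a)) (p k) :=
          dist_triangle _ _ _
      _ ≤ t + t := add_le_add (hxy ▸ hx) hdn
      _ = 2 * t := by ring
  calc volume {x : E2 | Metric.infDist x (segment ℝ a b) ≤ t}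
      ≤ volume (⋃ k : Fin (N + 1), Metric.closedBall (p k) (2 * t)) :=
        measure_mono hcover
    _ ≤ ∑' k : Fin (N + 1), volume (Metric.closedBall (p k) (2 * t)) :=
        measure_iUnion_le _
    _ = ∑' (_ : Fin (N + 1)), ENNReal.ofReal (polyVr * (2 * t) ^ 2) := by
        congr 1; ext k; exact poly_vol_cb _ (by positivity)
    _ = ((N : ℝ≥0∞) + 1) * ENNReal.ofReal (polyVr * (2 * t) ^ 2) := by
        rw [tsum_fintype]
        simp [Finset.sum_const, nsmul_eq_mul]
    _ = ENNReal.ofReal (((N : ℝ) + 1) * (polyVr * (2 * t) ^ 2)) := by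
        rw [show ((N : ℝ≥0∞) + 1) = ENNReal.ofReal ((N : ℝ) + 1) by
              rw [ENNReal.ofReal_add (Nat.cast_nonneg N) zero_le_one, ENNReal.ofReal_natCast,
                ENNReal.ofReal_one],
          ← ENNReal.ofReal_mul (by positivity)]
    _ ≤ ENNReal.ofReal (4 * polyVr * (L + 3) * t) := by
        apply ENNReal.ofReal_le_ofReal
        have hceil : (⌈L / t⌉₊ : ℝ) < L / t + 1 := Nat.ceil_lt_add_one (by positivity)
        have hN1 : (N : ℝ) + 1 ≤ L / t + 3 := by
          rw [hNdef]; push_cast; linarith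
        calc ((N : ℝ) + 1) * (polyVr * (2 * t) ^ 2)
            ≤ (L / t + 3) * (polyVr * (2 * t) ^ 2) := by
              apply mul_le_mul_of_nonneg_right hN1 (by positivity)
          _ = 4 * polyVr * (L * t + 3 * t ^ 2) := by field_simp; ring
          _ ≤ 4 * polyVr * (L * t + 3 * t) := by
              have : t ^ 2 ≤ t := by nlinarith
              nlinarith
          _ = 4 * polyVr * (L + 3) * t := by ring

/-- Measure of the `t`-neighborhood of a finite union of segments is `O(t)`. -/
lemma poly_frontier_bound {n : ℕ} (A B : Fin n → E2)
    (hne : (⋃ i, segment ℝ (A i) (B i)).Nonempty) :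
    ∃ C > 0, ∀ t ∈ Set.Ioc (0:ℝ) 1,
      volume {x : E2 | Metric.infDist x (⋃ i, segment ℝ (A i) (B i)) ≤ t}
        ≤ ENNReal.ofReal (C * t) := by
  choose C hCpos hC using fun i => poly_seg_bound (A i) (B i)
  have hsum : 0 ≤ ∑ i, C i := Finset.sum_nonneg fun i _ => (hCpos i).le
  refine ⟨∑ i, C i + 1, by linarith, fun t ht => ?_⟩
  · have hFc : IsClosed (⋃ i, segment ℝ (A i) (B i)) :=
      (isCompact_iUnion fun i => poly_isCompact_segment _ _).isClosed
    have hFne := hne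
    have hsub : {x : E2 | Metric.infDist x (⋃ i, segment ℝ (A i) (B i)) ≤ t} ⊆
        ⋃ i, {x : E2 | Metric.infDist x (segment ℝ (A i) (B i)) ≤ t} := by
      intro x hx
      obtain ⟨y, hy, hd⟩ := hFc.exists_infDist_eq_dist hFne x
      obtain ⟨i, hyi⟩ := mem_iUnion.1 hy
      exact mem_iUnion.2 ⟨i, le_trans (Metric.infDist_le_dist_of_mem hyi) (hd ▸ hx)⟩
    calc volume {x : E2 | Metric.infDist x (⋃ i, segment ℝ (A i) (B i)) ≤ t}
        ≤ volume (⋃ i, {x : E2 | Metric.infDist x (segment ℝ (A i) (B i)) ≤ t}) :=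
          measure_mono hsub
      _ ≤ ∑' i, volume {x : E2 | Metric.infDist x (segment ℝ (A i) (B i)) ≤ t} :=
          measure_iUnion_le _
      _ ≤ ∑' i, ENNReal.ofReal (C i * t) := ENNReal.tsum_le_tsum fun i => hC i t ht
      _ = ENNReal.ofReal ((∑ i, C i) * t) := by
          rw [tsum_fintype, Finset.sum_mul,
            ENNReal.ofReal_sum_of_nonneg fun i _ => mul_nonneg (hCpos i).le ht.1.le]
      _ ≤ ENNReal.ofReal ((∑ i, C i + 1) * t) := by
          apply ENNReal.ofReal_le_ofReal
          apply mul_le_mul_of_nonneg_right (by linarith) ht.1.le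

end PolyAux

/-- **Remark 3.1, key computation.** Let `Ω ⊂ ℝ²` be a polygonal domain. There is
`c > 0` such that for all `h ∈ (0,1/2)`:
`∫_{{x ∈ Ω : dist(x,∂Ω) ≥ h²}} dist(x,∂Ω)⁻¹ dx ≤ c |ln h|`. -/
theorem interior_distance_integral_estimate (Ω : Set (EuclideanSpace ℝ (Fin 2)))
    (hΩ : IsPolygonalDomain Ω) :
    ∃ c > (0 : ℝ), ∀ h ∈ Set.Ioo (0 : ℝ) (1 / 2),
      ∫⁻ x in {x ∈ Ω | h ^ 2 ≤ Metric.infDist x (frontier Ω)},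
          ENNReal.ofReal ((Metric.infDist x (frontier Ω))⁻¹)
        ≤ ENNReal.ofReal (c * |Real.log h|) := by
  obtain ⟨hopen, hconn, hbdd, n, A, B, hfr⟩ := hΩ
  by_cases hne : (frontier Ω).Nonempty
  case neg =>
    refine ⟨1, one_pos, fun h hh => ?_⟩
    have hfe : frontier Ω = ∅ := not_nonempty_iff_eq_empty.1 hne
    have hempty : {x ∈ Ω | h ^ 2 ≤ Metric.infDist x (frontier Ω)} = ∅ := by
      ext x
      simp only [hfe, Metric.infDist_empty, mem_setOf_eq, mem_empty_iff_false, iff_false,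
        not_and]
      intro _
      nlinarith [hh.1]
    simp [hempty]
  case pos =>
  obtain ⟨R₀, hR₀⟩ := hbdd.subset_closedBall 0
  set R : ℝ := max R₀ 1 with hRdef
  have hR1 : 1 ≤ R := le_max_right _ _
  have hR0 : 0 < R := lt_of_lt_of_le one_pos hR1
  have hΩR : Ω ⊆ Metric.closedBall 0 R :=
    hR₀.trans (Metric.closedBall_subset_closedBall (le_max_left _ _))
  have hFR : frontier Ω ⊆ Metric.closedBall 0 R :=
    frontier_subset_closure.trans (closure_minimal hΩR Metric.isClosed_closedBall)
  set M : ℝ := 2 * R with hMdef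
  have hM1 : 1 ≤ M := by simp only [hMdef]; linarith
  have hM0 : 0 < M := by linarith
  obtain ⟨C, hC, hCb⟩ := poly_frontier_bound A B (hfr ▸ hne)
  rw [← hfr] at hCb
  set C2 : ℝ := max C (polyVr * (R + M) ^ 2 + 1) with hC2def
  have hC2 : 0 < C2 := lt_of_lt_of_le hC (le_max_left _ _)
  have hext : ∀ t : ℝ, 0 < t → t ≤ M →
      volume {x : EuclideanSpace ℝ (Fin 2) | Metric.infDist x (frontier Ω) ≤ t}
        ≤ ENNReal.ofReal (C2 * t) := by
    intro t ht0 htM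
    rcases le_or_gt t 1 with h1 | h1
    · refine (hCb t ⟨ht0, h1⟩).trans (ENNReal.ofReal_le_ofReal ?_)
      exact mul_le_mul_of_nonneg_right (le_max_left _ _) ht0.le
    · have hsub : {x : EuclideanSpace ℝ (Fin 2) | Metric.infDist x (frontier Ω) ≤ t}
          ⊆ Metric.closedBall 0 (R + M) := by
        intro x hx
        obtain ⟨y, hy, hd⟩ := isClosed_frontier.exists_infDist_eq_dist hne x
        have h2 : dist x y ≤ M := le_trans (hd ▸ hx) htM
        have h3 : dist y 0 ≤ R := Metric.mem_closedBall.1 (hFR hy)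
        have h4 : dist x 0 ≤ dist x y + dist y 0 := dist_triangle _ _ _
        exact Metric.mem_closedBall.2 (by linarith)
      calc volume {x : EuclideanSpace ℝ (Fin 2) | Metric.infDist x (frontier Ω) ≤ t}
          ≤ volume (Metric.closedBall (0 : EuclideanSpace ℝ (Fin 2)) (R + M)) :=
            measure_mono hsub
        _ = ENNReal.ofReal (polyVr * (R + M) ^ 2) := poly_vol_cb _ (by positivity)
        _ ≤ ENNReal.ofReal (C2 * t) := by
            apply ENNReal.ofReal_le_ofReal
            have h5 : polyVr * (R + M) ^ 2 + 1 ≤ C2 := le_max_right _ _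
            nlinarith
  have hB : 0 < Real.log 2 := Real.log_pos one_lt_two
  have hlogM : 0 ≤ Real.log M := Real.log_nonneg hM1
  set c : ℝ := 2 * C2 * (Real.log M / (Real.log 2) ^ 2 + 4 / Real.log 2) with hcdef
  have hcpos : 0 < c := by
    have h6 : 0 ≤ Real.log M / (Real.log 2) ^ 2 := by positivity
    have h7 : 0 < 4 / Real.log 2 := by positivity
    have : 0 < 2 * C2 := by linarith
    nlinarith
  refine ⟨c, hcpos, fun h hh => ?_⟩
  obtain ⟨hh0, hh2⟩ := hh
  have hh1 : h < 1 := by linarith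
  set K : ℕ := ⌈Real.logb 2 (M / h ^ 2)⌉₊ with hKdef
  set Ak : ℕ → Set (EuclideanSpace ℝ (Fin 2)) := fun k =>
    {x | M / 2 ^ (k + 1) < Metric.infDist x (frontier Ω) ∧
      Metric.infDist x (frontier Ω) ≤ M / 2 ^ k} with hAkdef
  have hAkm : ∀ k, MeasurableSet (Ak k) := fun k => by
    have : Ak k = (fun x => Metric.infDist x (frontier Ω)) ⁻¹'
        (Set.Ioc (M / 2 ^ (k + 1)) (M / 2 ^ k)) := rfl
    rw [this]
    exact measurableSet_Ioc.preimage (Metric.continuous_infDist_pt _).measurable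
  have hS : {x ∈ Ω | h ^ 2 ≤ Metric.infDist x (frontier Ω)} ⊆ ⋃ k : Fin (K + 1), Ak k := by
    rintro x ⟨hxΩ, hx2⟩
    set dx : ℝ := Metric.infDist x (frontier Ω) with hdx
    have hd0 : 0 < dx := lt_of_lt_of_le (by positivity) hx2
    have hdM : dx ≤ M := by
      obtain ⟨y, hy⟩ := hne
      have h1 : dist x y ≤ dist x 0 + dist 0 y := dist_triangle _ _ _
      have hx0 : dist x 0 ≤ R := Metric.mem_closedBall.1 (hΩR hxΩ)
      have hy0 : dist 0 y ≤ R := by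
        rw [dist_comm]; exact Metric.mem_closedBall.1 (hFR hy)
      calc dx ≤ dist x y := Metric.infDist_le_dist_of_mem hy
        _ ≤ M := by rw [hMdef]; linarith
    have hMd : 1 ≤ M / dx := (one_le_div hd0).2 hdM
    set k : ℕ := ⌊Real.logb 2 (M / dx)⌋₊ with hk
    have hlb0 : 0 ≤ Real.logb 2 (M / dx) := Real.logb_nonneg one_lt_two hMd
    have hup : M / dx < 2 ^ (k + 1) := by
      have h2 : Real.logb 2 (M / dx) < (k : ℝ) + 1 := Nat.lt_floor_add_one _
      have h3 := (Real.logb_lt_iff_lt_rpow one_lt_two (by positivity)).1 h2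
      calc M / dx < (2 : ℝ) ^ ((k : ℝ) + 1) := h3
        _ = 2 ^ (k + 1) := by
            rw [← Real.rpow_natCast 2 (k + 1)]; push_cast; ring_nf
    have hlo : (2 : ℝ) ^ k ≤ M / dx := by
      have h2 : (k : ℝ) ≤ Real.logb 2 (M / dx) := Nat.floor_le hlb0
      calc (2 : ℝ) ^ k = (2 : ℝ) ^ (k : ℝ) := (Real.rpow_natCast 2 k).symm
        _ ≤ 2 ^ Real.logb 2 (M / dx) := (Real.rpow_le_rpow_left_iff one_lt_two).2 h2
        _ = M / dx := Real.rpow_logb two_pos (by norm_num) (by positivity)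
    have hkK : k < K + 1 := by
      have h4 : M / dx ≤ M / h ^ 2 :=
        div_le_div_of_nonneg_left hM0.le (by positivity) hx2
      have h5 : Real.logb 2 (M / dx) ≤ Real.logb 2 (M / h ^ 2) :=
        Real.logb_le_logb_of_le one_lt_two (by positivity) h4
      exact Nat.lt_succ_of_le (le_trans (Nat.floor_le_ceil _) (Nat.ceil_le_ceil h5))
    refine mem_iUnion.2 ⟨⟨k, hkK⟩, ?_, ?_⟩
    · have hp : (0 : ℝ) < 2 ^ (k + 1) := by positivity
      rw [div_lt_iff₀ hp]
      have h6 := (div_lt_iff₀ hd0).1 hup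
      linarith
    · have hp : (0 : ℝ) < 2 ^ k := by positivity
      rw [le_div_iff₀ hp]
      have h7 := (le_div_iff₀ hd0).1 hlo
      linarith
  have key : ∀ k : ℕ,
      ∫⁻ x in Ak k, ENNReal.ofReal ((Metric.infDist x (frontier Ω))⁻¹)
        ≤ ENNReal.ofReal (2 * C2) := by
    intro k
    have hp : (0 : ℝ) < 2 ^ k := by positivity
    have hp1 : (0 : ℝ) < 2 ^ (k + 1) := by positivity
    have hMk : (0 : ℝ) < M / 2 ^ (k + 1) := by positivity
    calc ∫⁻ x in Ak k, ENNReal.ofReal ((Metric.infDist x (frontier Ω))⁻¹)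
        ≤ ∫⁻ _x in Ak k, ENNReal.ofReal (2 ^ (k + 1) / M) := by
          apply setLIntegral_mono' (hAkm k)
          intro x hx
          apply ENNReal.ofReal_le_ofReal
          calc (Metric.infDist x (frontier Ω))⁻¹ ≤ (M / 2 ^ (k + 1))⁻¹ :=
                inv_anti₀ hMk hx.1.le
            _ = 2 ^ (k + 1) / M := by rw [inv_div]
      _ = ENNReal.ofReal (2 ^ (k + 1) / M) * volume (Ak k) := setLIntegral_const _ _
      _ ≤ ENNReal.ofReal (2 ^ (k + 1) / M) * ENNReal.ofReal (C2 * (M / 2 ^ k)) := by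
          gcongr
          refine le_trans (measure_mono fun x hx => hx.2) (hext (M / 2 ^ k) (by positivity) ?_)
          exact div_le_self hM0.le (one_le_pow₀ (by norm_num))
      _ = ENNReal.ofReal (2 * C2) := by
          rw [← ENNReal.ofReal_mul (by positivity)]
          congr 1
          field_simp
          rw [pow_succ]
  calc ∫⁻ x in {x ∈ Ω | h ^ 2 ≤ Metric.infDist x (frontier Ω)},
        ENNReal.ofReal ((Metric.infDist x (frontier Ω))⁻¹)
      ≤ ∫⁻ x in ⋃ k : Fin (K + 1), Ak k,
          ENNReal.ofReal ((Metric.infDist x (frontier Ω))⁻¹) := lintegral_mono_set hS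
    _ ≤ ∑' k : Fin (K + 1), ∫⁻ x in Ak (k : ℕ),
          ENNReal.ofReal ((Metric.infDist x (frontier Ω))⁻¹) := lintegral_iUnion_le _ _
    _ ≤ ∑' (_ : Fin (K + 1)), ENNReal.ofReal (2 * C2) :=
        ENNReal.tsum_le_tsum fun k => key k
    _ = ENNReal.ofReal (((K : ℝ) + 1) * (2 * C2)) := by
        rw [tsum_fintype]
        simp only [Finset.sum_const, Finset.card_univ, Fintype.card_fin, nsmul_eq_mul]
        rw [show ((K + 1 : ℕ) : ℝ≥0∞) = ENNReal.ofReal ((K : ℝ) + 1) by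
              rw [ENNReal.ofReal_add (Nat.cast_nonneg K) zero_le_one, ENNReal.ofReal_natCast,
                ENNReal.ofReal_one]; push_cast; ring,
          ← ENNReal.ofReal_mul (by positivity)]
    _ ≤ ENNReal.ofReal (c * |Real.log h|) := by
        apply ENNReal.ofReal_le_ofReal
        set Aa : ℝ := |Real.log h| with hAa
        have hlh : Real.log h < 0 := Real.log_neg hh0 hh1
        have hAneg : Aa = -Real.log h := abs_of_neg hlh
        have hBA : Real.log 2 ≤ Aa := by
          have h8 : Real.log h ≤ Real.log (1 / 2) := Real.log_le_log hh0 hh2.le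
          have h9 : Real.log (1 / 2) = -Real.log 2 := by
            rw [one_div, Real.log_inv]
          rw [hAneg]; linarith
        have hMh1 : 1 ≤ M / h ^ 2 := by
          rw [one_le_div (by positivity)]
          nlinarith
        have hx0 : 0 ≤ Real.logb 2 (M / h ^ 2) := Real.logb_nonneg one_lt_two hMh1
        have hK : (K : ℝ) ≤ Real.logb 2 (M / h ^ 2) + 1 := (Nat.ceil_lt_add_one hx0).le
        have hlogb : Real.logb 2 (M / h ^ 2) = (Real.log M + 2 * Aa) / Real.log 2 := by
          rw [Real.logb, Real.log_div hM0.ne' (by positivity), Real.log_pow]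
          rw [hAneg]; push_cast; ring_nf
        have hineq : (K : ℝ) + 1 ≤ (Real.log M / (Real.log 2) ^ 2 + 4 / Real.log 2) * Aa := by
          have h1 : (K : ℝ) + 1 ≤ (Real.log M + 2 * Aa) / Real.log 2 + 2 := by
            rw [← hlogb]; linarith
          have e1 : (Real.log M + 2 * Aa) / Real.log 2 + 2
              = (Real.log M + 2 * Aa + 2 * Real.log 2) / Real.log 2 := by
            field_simp
          have e2 : (Real.log M / (Real.log 2) ^ 2 + 4 / Real.log 2) * Aa
              = (Real.log M * Aa + 4 * Aa * Real.log 2) / (Real.log 2) ^ 2 := by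
            field_simp
          have h2 : (Real.log M + 2 * Aa + 2 * Real.log 2) / Real.log 2
              ≤ (Real.log M * Aa + 4 * Aa * Real.log 2) / (Real.log 2) ^ 2 := by
            rw [div_le_div_iff₀ hB (by positivity)]
            nlinarith [mul_nonneg (mul_nonneg (sub_nonneg.2 hBA) hlogM) hB.le,
              mul_nonneg (sub_nonneg.2 hBA) (sq_nonneg (Real.log 2))]
          rw [e2]
          calc (K : ℝ) + 1 ≤ (Real.log M + 2 * Aa) / Real.log 2 + 2 := h1
            _ = (Real.log M + 2 * Aa + 2 * Real.log 2) / Real.log 2 := e1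
            _ ≤ _ := h2
        calc ((K : ℝ) + 1) * (2 * C2)
            ≤ ((Real.log M / (Real.log 2) ^ 2 + 4 / Real.log 2) * Aa) * (2 * C2) := by
              apply mul_le_mul_of_nonneg_right hineq (by linarith)
          _ = c * Aa := by rw [hcdef]; ring
end
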